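/- arXiv:2005.08073 — 10 statements merged into one kernel-verified Lean document; each statement's English description precedes it below -/
import Mathlib

section
/- Let G be a properly edge-coloured graph on n vertices containing no rainbow cycle of length 2k (for an integer k ≥ 2). Then there exists a constant C depending only on k such that for every vertex a of G, the number of paths of length 2 starting at a is at most C·n. -/
open SimpleGraph

/-- A colouring of (potential) edges is proper on `G` if no two distinct edges of `G`
sharing a vertex receive the same colour. -/
def ProperColoring {V γ : Type*} (G : SimpleGraph V) (c : Sym2 V → γ) : Prop :=
  ∀ e f : Sym2 V, e ∈ G.edgeSet → f ∈ G.edgeSet → e ≠ f → (∃ v, v ∈ e ∧ v ∈ f) → c e ≠ c f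

/-- `G` (with colouring `c`) contains a rainbow cycle of length `t`. -/
def HasRainbowCycle {V γ : Type*} (G : SimpleGraph V) (c : Sym2 V → γ) (t : ℕ) : Prop :=
  ∃ (u : V) (w : G.Walk u u), w.IsCycle ∧ w.length = t ∧ (w.edges.map c).Nodup

open scoped Classical

noncomputable def dS {V : Type} (G : SimpleGraph V) (x : V) (S : Finset V) : ℕ :=
  (S.filter (fun u => G.Adj x u)).card

lemma dS_sum_comm {V : Type} (G : SimpleGraph V) (X Y : Finset V) :
    ∑ x ∈ X, dS G x Y = ∑ y ∈ Y, dS G y X := by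
  unfold dS
  simp only [Finset.card_filter]
  rw [Finset.sum_comm]
  refine Finset.sum_congr rfl fun y _ => Finset.sum_congr rfl fun x _ => ?_
  simp [G.adj_comm]

lemma clean {V : Type} (G : SimpleGraph V) (α β : ℕ) :
    ∀ n (X Y : Finset V), X.card + Y.card ≤ n →
      α * X.card + β * Y.card < ∑ x ∈ X, dS G x Y →
      ∃ X' Y', X' ⊆ X ∧ Y' ⊆ Y ∧ X'.Nonempty ∧ Y'.Nonempty ∧
        (∀ x ∈ X', α < dS G x Y') ∧ (∀ y ∈ Y', β < dS G y X') := by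
  intro n
  induction n with
  | zero =>
    intro X Y hcard hsum
    have hX : X = ∅ := Finset.card_eq_zero.mp (by omega)
    subst hX
    simp at hsum
  | succ n ih =>
    intro X Y hcard hsum
    by_cases hx : ∃ x ∈ X, dS G x Y ≤ α
    · obtain ⟨x, hxX, hdx⟩ := hx
      have hce : (X.erase x).card + 1 = X.card := Finset.card_erase_add_one hxX
      have hse : dS G x Y + ∑ x' ∈ X.erase x, dS G x' Y = ∑ x' ∈ X, dS G x' Y :=
        Finset.add_sum_erase X (fun x' => dS G x' Y) hxX
      have hsum' : α * (X.erase x).card + β * Y.card < ∑ x' ∈ X.erase x, dS G x' Y := by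
        have h1 : α * X.card = α * (X.erase x).card + α := by
          rw [← hce]; ring
        omega
      obtain ⟨X', Y', h1, h2, h3, h4, h5, h6⟩ := ih (X.erase x) Y (by omega) hsum'
      exact ⟨X', Y', h1.trans (Finset.erase_subset _ _), h2, h3, h4, h5, h6⟩
    · by_cases hy : ∃ y ∈ Y, dS G y X ≤ β
      · obtain ⟨y, hyY, hdy⟩ := hy
        have hce : (Y.erase y).card + 1 = Y.card := Finset.card_erase_add_one hyY
        have hse : dS G y X + ∑ y' ∈ Y.erase y, dS G y' X = ∑ y' ∈ Y, dS G y' X :=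
          Finset.add_sum_erase Y (fun y' => dS G y' X) hyY
        have hsum' : α * X.card + β * (Y.erase y).card < ∑ x ∈ X, dS G x (Y.erase y) := by
          rw [dS_sum_comm]
          rw [dS_sum_comm] at hsum
          have h1 : β * Y.card = β * (Y.erase y).card + β := by
            rw [← hce]; ring
          omega
        obtain ⟨X', Y', h1, h2, h3, h4, h5, h6⟩ := ih X (Y.erase y) (by omega) hsum'
        exact ⟨X', Y', h1, h2.trans (Finset.erase_subset _ _), h3, h4, h5, h6⟩
      · push_neg at hx hy
        refine ⟨X, Y, subset_rfl, subset_rfl, ?_, ?_, hx, hy⟩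
        · rw [Finset.nonempty_iff_ne_empty]
          rintro rfl
          simp at hsum
        · rw [Finset.nonempty_iff_ne_empty]
          rintro rfl
          have : ∀ x ∈ X, dS G x (∅ : Finset V) = 0 := by intro x _; simp [dS]
          rw [Finset.sum_congr rfl this] at hsum
          simp at hsum

lemma pick {V : Type} {γ : Type} (G : SimpleGraph V) (c : Sym2 V → γ)
    (hc : ProperColoring G c) (v v' : V) (S B : Finset V) (Γ₁ Γ₂ : Finset γ)
    (hadj' : ∀ u ∈ S, G.Adj v u → G.Adj v' u)
    (h : B.card + Γ₁.card + Γ₂.card < dS G v S) :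
    ∃ u ∈ S, G.Adj v u ∧ u ∉ B ∧ c s(v, u) ∉ Γ₁ ∧ c s(v', u) ∉ Γ₂ := by
  rw [dS] at h
  set T := S.filter (fun u => G.Adj v u) with hT
  have hTadj : ∀ u ∈ T, G.Adj v u := fun u hu => (Finset.mem_filter.mp hu).2
  have hTadj' : ∀ u ∈ T, G.Adj v' u := fun u hu =>
    hadj' u (Finset.mem_filter.mp hu).1 (Finset.mem_filter.mp hu).2
  -- colour counting
  have hcb : ∀ (w : V), (∀ u ∈ T, G.Adj w u) → ∀ (Γ : Finset γ),
      (T.filter (fun u => c s(w, u) ∈ Γ)).card ≤ Γ.card := by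
    intro w hw Γ
    apply Finset.card_le_card_of_injOn (fun u => c s(w, u))
    · intro u hu; exact (Finset.mem_filter.mp hu).2
    · intro u hu u' hu' heq
      by_contra hne
      have hu1 := hw u (Finset.mem_filter.mp (by exact_mod_cast hu)).1
      have hu2 := hw u' (Finset.mem_filter.mp (by exact_mod_cast hu')).1
      refine hc s(w, u) s(w, u') (G.mem_edgeSet.mpr hu1) (G.mem_edgeSet.mpr hu2)
        (fun hh => hne (Sym2.congr_right.mp hh)) ⟨w, ?_, ?_⟩ heq
      · exact Sym2.mem_mk_left w u
      · exact Sym2.mem_mk_left w u'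
  by_contra hcon
  push_neg at hcon
  have heq : T = T.filter (fun u => u ∈ B ∨ c s(v, u) ∈ Γ₁ ∨ c s(v', u) ∈ Γ₂) := by
    rw [Finset.filter_true_of_mem]
    intro u hu
    by_cases h1 : u ∈ B
    · exact Or.inl h1
    · by_cases h2 : c s(v, u) ∈ Γ₁
      · exact Or.inr (Or.inl h2)
      · exact Or.inr (Or.inr (hcon u (Finset.mem_filter.mp hu).1 (hTadj u hu) h1 h2))
  have hle : T.card ≤ B.card + Γ₁.card + Γ₂.card := by
    conv_lhs => rw [heq]
    rw [Finset.filter_or, Finset.filter_or]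
    refine le_trans (Finset.card_union_le _ _) ?_
    refine le_trans (Nat.add_le_add
      (Finset.card_le_card (fun u hu => (Finset.mem_filter.mp hu).2))
      (Finset.card_union_le _ _)) ?_
    have h1 := hcb v hTadj Γ₁
    have h2 := hcb v' hTadj' Γ₂
    omega
  omega

/-- if a properly edge-coloured graph on `n` vertices has no rainbow
cycle of length `2k` (`k ≥ 2`), then every vertex is the starting point of at most
`C·n` paths of length 2, where `C` depends only on `k`. -/
theorem rainbow_C2k_free_paths_of_length_two_from_vertex (k : ℕ) (hk : 2 ≤ k) :
    ∃ C : ℕ, ∀ (V : Type) [Fintype V] (G : SimpleGraph V) (γ : Type) (c : Sym2 V → γ),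
      ProperColoring G c → ¬ HasRainbowCycle G c (2 * k) →
      ∀ a : V,
        {p : V × V | G.Adj a p.1 ∧ G.Adj p.1 p.2 ∧ p.2 ≠ a}.ncard ≤ C * Fintype.card V := by
  refine ⟨16 * k + 1, ?_⟩
  intro V _ G γ c hc hno a
  by_contra hbig
  push_neg at hbig
  set n := Fintype.card V with hn
  set X₀ : Finset V := Finset.univ.filter (fun x => G.Adj a x) with hX₀
  set Y₀ : Finset V := Finset.univ.erase a with hY₀
  -- counting
  have hsub : {p : V × V | G.Adj a p.1 ∧ G.Adj p.1 p.2 ∧ p.2 ≠ a} ⊆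
      ↑(X₀.biUnion fun x => (Y₀.filter (fun y => G.Adj x y)).image (fun y => (x, y))) := by
    rintro ⟨x, y⟩ ⟨h1, h2, h3⟩
    simp only [Finset.coe_biUnion, Set.mem_iUnion, Finset.mem_coe, Finset.coe_image,
      Set.mem_image, Finset.mem_coe, Finset.mem_filter]
    exact ⟨x, by simp [hX₀, h1], y, ⟨by simp [hY₀, h3], h2⟩, rfl⟩
  have hle1 : {p : V × V | G.Adj a p.1 ∧ G.Adj p.1 p.2 ∧ p.2 ≠ a}.ncard ≤
      (X₀.biUnion fun x => (Y₀.filter (fun y => G.Adj x y)).image (fun y => (x, y))).card := by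
    have := Set.ncard_le_ncard hsub (Finset.finite_toSet _)
    rwa [Set.ncard_coe_finset] at this
  have hle2 : (X₀.biUnion fun x => (Y₀.filter (fun y => G.Adj x y)).image (fun y => (x, y))).card
      ≤ ∑ x ∈ X₀, dS G x Y₀ :=
    le_trans (Finset.card_biUnion_le) (Finset.sum_le_sum fun x _ => by
      exact le_trans Finset.card_image_le le_rfl)
  have hX₀n : X₀.card ≤ n := le_trans (Finset.card_filter_le _ _) (by simp [hn])
  have hY₀n : Y₀.card ≤ n := le_trans (Finset.card_erase_le) (by simp [hn])
  have hsum : 8 * k * X₀.card + 8 * k * Y₀.card < ∑ x ∈ X₀, dS G x Y₀ := by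
    have e1 : 8 * k * X₀.card ≤ 8 * k * n := Nat.mul_le_mul_left _ hX₀n
    have e2 : 8 * k * Y₀.card ≤ 8 * k * n := Nat.mul_le_mul_left _ hY₀n
    have e3 : (16 * k + 1) * n = 8 * k * n + 8 * k * n + n := by ring
    linarith [hle1, hle2, hbig]
  obtain ⟨X', Y', hX'sub, hY'sub, hX'ne, hY'ne, hdX', hdY'⟩ :=
    clean G (8 * k) (8 * k) (X₀.card + Y₀.card) X₀ Y₀ le_rfl hsum
  have haX' : ∀ x ∈ X', G.Adj a x := fun x hx => (Finset.mem_filter.mp (hX'sub hx)).2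
  have hYa : ∀ y ∈ Y', y ≠ a := fun y hy => (Finset.mem_erase.mp (hY'sub hy)).1
  -- greedy rainbow path construction
  have main : ∀ j, 1 ≤ j → j ≤ k - 1 →
      ∃ (y : V) (w : G.Walk y a), y ∈ Y' ∧ w.length = 2 * j ∧
        w.support.Nodup ∧ (w.edges.map c).Nodup := by
    intro j h1
    induction j, h1 using Nat.le_induction with
    | base =>
      intro _
      obtain ⟨x₁, hx₁⟩ := hX'ne
      have hax₁ : G.Adj a x₁ := haX' x₁ hx₁
      have hTcard : 8 * k < dS G x₁ Y' := hdX' x₁ hx₁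
      obtain ⟨y₁, hy₁Y, hax₁y₁, hy₁B, hy₁c, -⟩ :=
        pick G c hc x₁ x₁ Y' ({x₁, a} : Finset V) ({c s(x₁, a)} : Finset γ) (∅ : Finset γ)
          (fun u _ h => h) (by
        have hb1 : ({x₁, a} : Finset V).card ≤ 2 := Finset.card_le_two ..
        simp only [Finset.card_singleton, Finset.card_empty]
        omega)
      have hy₁x : y₁ ≠ x₁ := fun h => hy₁B (by simp [h])
      have hy₁a : y₁ ≠ a := fun h => hy₁B (by simp [h])
      have hx₁a : x₁ ≠ a := hax₁.ne'
      refine ⟨y₁, Walk.cons hax₁y₁.symm (Walk.cons hax₁.symm Walk.nil), hy₁Y, ?_, ?_, ?_⟩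
      · simp
      · simp [hy₁x, hy₁a, hx₁a]
      · simp only [Walk.edges_cons, Walk.edges_nil, List.map_cons, List.map_nil,
          List.nodup_cons, List.mem_singleton, List.not_mem_nil, not_false_iff,
          List.nodup_nil, and_true]
        rw [Sym2.eq_swap (a := y₁)]
        simpa using hy₁c
    | succ j hj ih =>
      intro hjk
      obtain ⟨y, w, hyY, hlen, hsupnd, hrainbow⟩ := ih (by omega)
      have hsupcard : w.support.toFinset.card ≤ 2 * j + 1 := by
        refine le_trans (List.toFinset_card_le _) ?_
        rw [Walk.length_support, hlen]
      have hedgecard : ((w.edges.map c).toFinset).card ≤ 2 * j := by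
        refine le_trans (List.toFinset_card_le _) ?_
        rw [List.length_map, Walk.length_edges, hlen]
      -- pick x
      have hTcard : 8 * k < dS G y X' := hdY' y hyY
      obtain ⟨x, hxX, hyx, hxB, hxc, -⟩ :=
        pick G c hc y y X' w.support.toFinset ((w.edges.map c).toFinset) (∅ : Finset γ)
          (fun u _ h => h) (by
        simp only [Finset.card_empty]
        omega)
      have hxsup : x ∉ w.support := fun h => hxB (List.mem_toFinset.mpr h)
      have hxcol : c s(x, y) ∉ w.edges.map c := by
        rw [Sym2.eq_swap]
        exact fun h => hxc (List.mem_toFinset.mpr h)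
      set w₁ : G.Walk x a := Walk.cons hyx.symm w with hw₁
      have hw₁sup : w₁.support = x :: w.support := rfl
      have hw₁edge : w₁.edges = s(x, y) :: w.edges := rfl
      have hw₁nd : w₁.support.Nodup := by
        rw [hw₁sup, List.nodup_cons]; exact ⟨hxsup, hsupnd⟩
      have hw₁rb : (w₁.edges.map c).Nodup := by
        rw [hw₁edge, List.map_cons, List.nodup_cons]; exact ⟨hxcol, hrainbow⟩
      have hsupcard₁ : w₁.support.toFinset.card ≤ 2 * j + 2 := by
        refine le_trans (List.toFinset_card_le _) ?_
        rw [Walk.length_support, Walk.length_cons, hlen]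
      have hedgecard₁ : ((w₁.edges.map c).toFinset).card ≤ 2 * j + 1 := by
        refine le_trans (List.toFinset_card_le _) ?_
        rw [List.length_map, Walk.length_edges, Walk.length_cons, hlen]
      -- pick y'
      have hTcard₂ : 8 * k < dS G x Y' := hdX' x hxX
      obtain ⟨y', hy'Y, hxy', hy'B, hy'c, -⟩ :=
        pick G c hc x x Y' w₁.support.toFinset ((w₁.edges.map c).toFinset) (∅ : Finset γ)
          (fun u _ h => h) (by
        simp only [Finset.card_empty]
        omega)
      have hy'sup : y' ∉ w₁.support := fun h => hy'B (List.mem_toFinset.mpr h)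
      have hy'col : c s(y', x) ∉ w₁.edges.map c := by
        rw [Sym2.eq_swap]
        exact fun h => hy'c (List.mem_toFinset.mpr h)
      refine ⟨y', Walk.cons hxy'.symm w₁, hy'Y, ?_, ?_, ?_⟩
      · rw [Walk.length_cons, Walk.length_cons, hlen]; ring
      · rw [Walk.support_cons, List.nodup_cons]; exact ⟨hy'sup, hw₁nd⟩
      · rw [Walk.edges_cons, List.map_cons, List.nodup_cons]; exact ⟨hy'col, hw₁rb⟩
  -- closing the cycle
  obtain ⟨y, w, hyY, hlen, hsupnd, hrainbow⟩ := main (k - 1) (by omega) le_rfl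
  have hsupcard : w.support.toFinset.card ≤ 2 * (k - 1) + 1 := by
    refine le_trans (List.toFinset_card_le _) ?_
    rw [Walk.length_support, hlen]
  have hedgecard : ((w.edges.map c).toFinset).card ≤ 2 * (k - 1) := by
    refine le_trans (List.toFinset_card_le _) ?_
    rw [List.length_map, Walk.length_edges, hlen]
  have hTcard : 8 * k < dS G y X' := hdY' y hyY
  obtain ⟨xk, hxkX, hyxk, hxkB, hxkc1, hxkc2⟩ :=
    pick G c hc y a X' w.support.toFinset ((w.edges.map c).toFinset) ((w.edges.map c).toFinset)
      (fun u hu _ => haX' u hu) (by omega)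
  have haxk : G.Adj a xk := haX' xk hxkX
  have hxksup : xk ∉ w.support := fun h => hxkB (List.mem_toFinset.mpr h)
  have hcol1 : c s(xk, y) ∉ w.edges.map c := by
    rw [Sym2.eq_swap]
    exact fun h => hxkc1 (List.mem_toFinset.mpr h)
  have hcol2 : c s(a, xk) ∉ w.edges.map c := fun h => hxkc2 (List.mem_toFinset.mpr h)
  have hne0 : c s(a, xk) ≠ c s(xk, y) := by
    refine hc s(a, xk) s(xk, y) (G.mem_edgeSet.mpr haxk) (G.mem_edgeSet.mpr hyxk.symm)
      ?_ ⟨xk, Sym2.mem_mk_right a xk, Sym2.mem_mk_left xk y⟩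
    intro h
    rw [Sym2.eq_iff] at h
    rcases h with ⟨h1, h2⟩ | ⟨h1, h2⟩
    · exact haxk.ne h1
    · exact (hYa y hyY) h1.symm
  set c2 : G.Walk a a := Walk.cons haxk (Walk.cons hyxk.symm w) with hc2
  have hrb2 : (c2.edges.map c).Nodup := by
    have : c2.edges = s(a, xk) :: s(xk, y) :: w.edges := rfl
    rw [this, List.map_cons, List.map_cons, List.nodup_cons, List.nodup_cons]
    refine ⟨?_, hcol1, hrainbow⟩
    simp only [List.mem_cons]
    rintro (h | h)
    · exact hne0 h
    · exact hcol2 h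
  have hcyc : c2.IsCycle := by
    refine ⟨⟨⟨?_⟩, ?_⟩, ?_⟩
    · exact List.Nodup.of_map c hrb2
    · simp [hc2]
    · have : c2.support = a :: xk :: w.support := rfl
      rw [this]
      simp only [List.tail_cons, List.nodup_cons]
      exact ⟨hxksup, hsupnd⟩
  refine hno ⟨a, c2, hcyc, ?_, hrb2⟩
  rw [hc2, Walk.length_cons, Walk.length_cons, hlen]
  omega
end

section
/- Let G be a bipartite graph with parts X and Y, where X = N(a) for a vertex a and Y = N(N(a))\{a} in an ambient properly edge-coloured graph containing no rainbow C_{2k}. If the bipartite graph induced between X and Y contains a complete (100k)-ary tree of depth 2k (as a subgraph with root in X), then the ambient graph contains a rainbow cycle of length 2k, a contradiction; hence the number of edges between X and Y is at most C·(|X|+|Y|+1) for some constant C depending only on k. -/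
/-!
If there are more than `6k (|X| + |Y| + 1)` edges between `X` and `Y`, repeatedly deleting all
edges at a vertex of degree at most `6k` leaves a nonempty bipartite core in which every vertex
has degree more than `6k`. Inside the core one grows, two edges at a time, a path
`x₀ y₁ x₁ … y_{k-1} x_{k-1}` avoiding `a` whose colours, together with those of `a x₀` and of
`a x_{k-1}`, are distinct. Properness makes the core edges at the current end distinctly
coloured, so fewer than `6k` of them are blocked by a vertex or a colour already used, and the
path can always be extended. Closing it through `a` gives a rainbow `C_{2k}`.
-/

open SimpleGraph

open Finset

theorem ProperColoring.color_ne {V γ : Type*} {G : SimpleGraph V} {c : Sym2 V → γ}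
    (hc : ProperColoring G c) {u v w : V} (hv : G.Adj u v) (hw : G.Adj u w) (hvw : v ≠ w) :
    c s(u, v) ≠ c s(u, w) := by
  refine hc _ _ hv hw ?_ ⟨u, by simp, by simp⟩
  rw [Ne, Sym2.eq_iff]
  rintro (⟨-, rfl⟩ | ⟨rfl, -⟩)
  exacts [hvw rfl, G.irrefl hw]

theorem Finset.card_filter_mem_le_of_injOn {α β : Type*} [DecidableEq β] {s : Finset α}
    {f : α → β} (hf : Set.InjOn f s) (l : List β) : #{x ∈ s | f x ∈ l} ≤ l.length :=
  calc #{x ∈ s | f x ∈ l}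
      = #({x ∈ s | f x ∈ l}.image f) :=
        (card_image_of_injOn (hf.mono (coe_subset.mpr (filter_subset _ _)))).symm
    _ ≤ #l.toFinset := card_le_card fun b hb => by
        obtain ⟨x, hx, rfl⟩ := mem_image.mp hb
        simpa using (mem_filter.mp hx).2
    _ ≤ l.length := List.toFinset_card_le l

theorem Finset.exists_mem_notMem_lists_of_injOn {α β : Type*} [DecidableEq α] [DecidableEq β]
    {s : Finset α} {f g : α → β} (hf : Set.InjOn f s) (hg : Set.InjOn g s)
    (l : List α) (lf lg : List β) (h : l.length + lf.length + lg.length < #s) :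
    ∃ x ∈ s, x ∉ l ∧ f x ∉ lf ∧ g x ∉ lg := by
  have hbad : #{x ∈ s | x ∈ l ∨ f x ∈ lf ∨ g x ∈ lg} < #s :=
    calc #{x ∈ s | x ∈ l ∨ f x ∈ lf ∨ g x ∈ lg}
        ≤ #{x ∈ s | x ∈ l} + (#{x ∈ s | f x ∈ lf} + #{x ∈ s | g x ∈ lg}) := by
          rw [filter_or, filter_or]
          exact (card_union_le _ _).trans (by gcongr; exact card_union_le _ _)
      _ ≤ l.length + (lf.length + lg.length) := by
          gcongr
          exacts [card_filter_mem_le_of_injOn (f := id) (Set.injOn_id _) l,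
            card_filter_mem_le_of_injOn hf lf, card_filter_mem_le_of_injOn hg lg]
      _ < #s := by omega
  obtain ⟨x, hx, hxbad⟩ := exists_mem_notMem_of_card_lt_card hbad
  simp only [mem_filter, not_and_or, not_or] at hxbad
  exact ⟨x, hx, hxbad.resolve_left (not_not.mpr hx)⟩

section Core

variable {ι α β : Type*} [DecidableEq α] [DecidableEq β]

theorem Finset.mul_card_image_add_lt_card_filter_ne {D : ℕ} {E : Finset ι} {f : ι → α}
    {g : ι → β} {p : ι} (hp : p ∈ E) (hsmall : #{q ∈ E | f q = f p} ≤ D)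
    (h : D * (#(E.image f) + #(E.image g)) < #E) :
    D * (#({q ∈ E | f q ≠ f p}.image f) + #({q ∈ E | f q ≠ f p}.image g))
      < #{q ∈ E | f q ≠ f p} := by
  have hsplit : #{q ∈ E | f q = f p} + #{q ∈ E | f q ≠ f p} = #E :=
    card_filter_add_card_filter_not _
  have hf : #({q ∈ E | f q ≠ f p}.image f) + 1 ≤ #(E.image f) := by
    have hsub : {q ∈ E | f q ≠ f p}.image f ⊆ (E.image f).erase (f p) := by
      intro x; simp only [mem_image, mem_filter, mem_erase]; grind
    have := card_le_card hsub
    rw [card_erase_of_mem (mem_image_of_mem f hp)] at this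
    have := card_pos.mpr ⟨f p, mem_image_of_mem f hp⟩
    omega
  have hg : #({q ∈ E | f q ≠ f p}.image g) ≤ #(E.image g) :=
    card_le_card (image_subset_image (filter_subset _ _))
  have : D * (#({q ∈ E | f q ≠ f p}.image f) + #({q ∈ E | f q ≠ f p}.image g) + 1)
      ≤ D * (#(E.image f) + #(E.image g)) := Nat.mul_le_mul_left D (by omega)
  rw [mul_add, mul_one] at this
  omega

theorem Finset.exists_subset_forall_lt_card_fibers (D : ℕ) (E : Finset ι) (f : ι → α)
    (g : ι → β) (h : D * (#(E.image f) + #(E.image g)) < #E) :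
    ∃ E' ⊆ E, E'.Nonempty ∧
      ∀ p ∈ E', D < #{q ∈ E' | f q = f p} ∧ D < #{q ∈ E' | g q = g p} := by
  induction E using Finset.strongInduction with
  | H E ih =>
  by_cases hall : ∀ p ∈ E, D < #{q ∈ E | f q = f p} ∧ D < #{q ∈ E | g q = g p}
  · exact ⟨E, subset_rfl, nonempty_of_ne_empty (by rintro rfl; simp at h), hall⟩
  push Not at hall
  obtain ⟨p, hp, hbad⟩ := hall
  obtain ⟨E₂, hE₂, h₂⟩ : ∃ E₂ ⊂ E, D * (#(E₂.image f) + #(E₂.image g)) < #E₂ := by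
    by_cases hfp : #{q ∈ E | f q = f p} ≤ D
    · exact ⟨{q ∈ E | f q ≠ f p}, filter_ssubset.mpr ⟨p, hp, by simp⟩,
        mul_card_image_add_lt_card_filter_ne hp hfp h⟩
    · refine ⟨{q ∈ E | g q ≠ g p}, filter_ssubset.mpr ⟨p, hp, by simp⟩, ?_⟩
      rw [add_comm]
      exact mul_card_image_add_lt_card_filter_ne hp (hbad (by omega)) (by rwa [add_comm])
  obtain ⟨E', hE', hne, hdeg⟩ := ih E₂ hE₂ h₂
  exact ⟨E', hE'.trans hE₂.subset, hne, hdeg⟩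

end Core

section ApexPaths

variable {V γ : Type*} {G : SimpleGraph V} {c : Sym2 V → γ} {a : V}

/-- Closing `w` with the edges `a u` and `x₀ a` gives a rainbow cycle through `a`, provided
`u ≠ x₀`. -/
def IsRainbowThroughApex (c : Sym2 V → γ) (a : V) {u x₀ : V} (w : G.Walk u x₀) : Prop :=
  w.IsPath ∧ a ∉ w.support ∧ (c s(a, x₀) :: w.edges.map c).Nodup ∧ c s(a, u) ∉ w.edges.map c

theorem isRainbowThroughApex_nil {x : V} (hax : G.Adj a x) :
    IsRainbowThroughApex c a (Walk.nil : G.Walk x x) := by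
  simp [IsRainbowThroughApex, hax.ne]

theorem IsRainbowThroughApex.cons (hc : ProperColoring G c) {u x₀ x y : V} {w : G.Walk u x₀}
    (hw : IsRainbowThroughApex c a w) (huy : G.Adj u y) (hxy : G.Adj x y) (hax : G.Adj a x)
    (hya : y ≠ a) (hy : y ∉ w.support) (hx : x ∉ w.support)
    (hcuy : c s(u, y) ∉ c s(a, x₀) :: w.edges.map c)
    (hcxy : c s(x, y) ∉ c s(u, y) :: c s(a, x₀) :: w.edges.map c)
    (hcax : c s(a, x) ∉ c s(u, y) :: w.edges.map c) :
    IsRainbowThroughApex c a (Walk.cons hxy (Walk.cons huy.symm w)) := by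
  obtain ⟨hpath, ha, hnodup, -⟩ := hw
  have hcax_xy : c s(a, x) ≠ c s(x, y) := by
    rw [Sym2.eq_swap]; exact hc.color_ne hax.symm hxy hya.symm
  simp only [List.mem_cons, not_or] at hcuy hcxy hcax
  refine ⟨?_, ?_, ?_, ?_⟩
  · exact (hpath.cons hy).cons (by simp [hxy.ne, hx])
  · simp [hax.ne, hya.symm, ha]
  · simp only [Walk.edges_cons, List.map_cons, Sym2.eq_swap (a := y) (b := u)]
    simp only [List.nodup_cons, List.mem_cons, not_or] at hnodup ⊢
    grind
  · simp only [Walk.edges_cons, List.map_cons, List.mem_cons, not_or,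
      Sym2.eq_swap (a := y) (b := u)]
    exact ⟨hcax_xy, hcax.1, hcax.2⟩

theorem IsRainbowThroughApex.hasRainbowCycle (hc : ProperColoring G c) {u x₀ : V}
    {w : G.Walk u x₀} (hw : IsRainbowThroughApex c a w) (hau : G.Adj a u) (hax₀ : G.Adj a x₀)
    (hlen : w.length ≠ 0) : HasRainbowCycle G c (w.length + 2) := by
  obtain ⟨hpath, ha, hnodup, hcau⟩ := hw
  have hux₀ : u ≠ x₀ := by
    rintro rfl
    exact hlen (Walk.length_eq_zero_iff.mpr (Walk.isPath_iff_nil.mp hpath))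
  have hcolors : ((Walk.cons hau (w.concat hax₀.symm)).edges.map c).Nodup := by
    rw [Walk.edges_cons, Walk.edges_concat, List.map_cons, List.map_concat,
      Sym2.eq_swap (a := x₀), List.nodup_cons, List.concat_eq_append, List.nodup_append_comm]
    simpa [hcau, hc.color_ne hau hax₀ hux₀] using hnodup
  refine ⟨a, _, (Walk.cons_isCycle_iff _ _).mpr ⟨hpath.concat ha _, ?_⟩, by simp, hcolors⟩
  exact (List.nodup_cons.mp (List.Nodup.of_map c (Walk.edges_cons .. ▸ hcolors))).1

end ApexPaths

section BipartiteCore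

variable {α β : Type*} [DecidableEq α] [DecidableEq β]

theorem Finset.mem_image_snd_filter_fst {E : Finset (α × β)} {x : α} {y : β} :
    y ∈ {q ∈ E | q.1 = x}.image Prod.snd ↔ (x, y) ∈ E := by
  simp

theorem Finset.mem_image_fst_filter_snd {E : Finset (α × β)} {x : α} {y : β} :
    x ∈ {q ∈ E | q.2 = y}.image Prod.fst ↔ (x, y) ∈ E := by
  simp

theorem Finset.card_image_snd_filter_fst (E : Finset (α × β)) (x : α) :
    #({q ∈ E | q.1 = x}.image Prod.snd) = #{q ∈ E | q.1 = x} :=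
  card_image_of_injOn fun _ hp _ hq h =>
    Prod.ext ((mem_filter.mp hp).2.trans (mem_filter.mp hq).2.symm) h

theorem Finset.card_image_fst_filter_snd (E : Finset (α × β)) (y : β) :
    #({q ∈ E | q.2 = y}.image Prod.fst) = #{q ∈ E | q.2 = y} :=
  card_image_of_injOn fun _ hp _ hq h =>
    Prod.ext h ((mem_filter.mp hp).2.trans (mem_filter.mp hq).2.symm)

end BipartiteCore

section GreedyPath

variable {V γ : Type*} [DecidableEq V] [DecidableEq γ] {G : SimpleGraph V} {c : Sym2 V → γ}
  {a : V} {E : Finset (V × V)} {D : ℕ}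

theorem exists_isRainbowThroughApex_extension (hc : ProperColoring G c)
    (hE : ∀ p ∈ E, G.Adj a p.1 ∧ p.2 ≠ a ∧ G.Adj p.1 p.2)
    (hdeg : ∀ p ∈ E, D < #{q ∈ E | q.1 = p.1} ∧ D < #{q ∈ E | q.2 = p.2})
    {u x₀ : V} {w : G.Walk u x₀} (hw : IsRainbowThroughApex c a w) (hu : u ∈ E.image Prod.fst)
    (hD : 3 * w.length + 4 < D) :
    ∃ x ∈ E.image Prod.fst, ∃ w' : G.Walk x x₀,
      IsRainbowThroughApex c a w' ∧ w'.length = w.length + 2 := by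
  obtain ⟨p, hp, rfl⟩ := mem_image.mp hu
  set Ys := {q ∈ E | q.1 = p.1}.image Prod.snd with hYs_def
  have hYs_card : D < #Ys := by rw [hYs_def, card_image_snd_filter_fst]; exact (hdeg p hp).1
  have hYs : ∀ y ∈ Ys, (p.1, y) ∈ E := fun y hy => mem_image_snd_filter_fst.mp hy
  have hinj_uy : Set.InjOn (fun y => c s(p.1, y)) Ys := fun y hy y' hy' h => by_contra fun hne =>
    hc.color_ne (hE _ (hYs y hy)).2.2 (hE _ (hYs y' hy')).2.2 hne h
  obtain ⟨y, hyYs, hy, hcuy, -⟩ := exists_mem_notMem_lists_of_injOn hinj_uy hinj_uy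
    w.support (c s(a, x₀) :: w.edges.map c) [] (by
      simp only [Walk.length_support, List.length_cons, List.length_map, Walk.length_edges,
        List.length_nil]
      omega)
  obtain ⟨-, hya, huy⟩ := hE _ (hYs y hyYs)
  set Xs := {q ∈ E | q.2 = y}.image Prod.fst with hXs_def
  have hXs_card : D < #Xs := by
    rw [hXs_def, card_image_fst_filter_snd]; exact (hdeg _ (hYs y hyYs)).2
  have hXs : ∀ x ∈ Xs, (x, y) ∈ E := fun x hx => mem_image_fst_filter_snd.mp hx
  have hinj_xy : Set.InjOn (fun x => c s(x, y)) Xs := fun x hx x' hx' h => by_contra fun hne =>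
    hc.color_ne (hE _ (hXs x hx)).2.2.symm (hE _ (hXs x' hx')).2.2.symm hne
      (by simpa only [Sym2.eq_swap (a := y)] using h)
  have hinj_ax : Set.InjOn (fun x => c s(a, x)) Xs := fun x hx x' hx' h => by_contra fun hne =>
    hc.color_ne (hE _ (hXs x hx)).1 (hE _ (hXs x' hx')).1 hne h
  obtain ⟨x, hxXs, hx, hcxy, hcax⟩ := exists_mem_notMem_lists_of_injOn hinj_xy hinj_ax
    w.support (c s(p.1, y) :: c s(a, x₀) :: w.edges.map c) (c s(p.1, y) :: w.edges.map c) (by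
      simp only [Walk.length_support, List.length_cons, List.length_map, Walk.length_edges]
      omega)
  obtain ⟨hax, -, hxy⟩ := hE _ (hXs x hxXs)
  exact ⟨x, mem_image_of_mem _ (hXs x hxXs), _,
    hw.cons hc huy hxy hax hya hy hx hcuy hcxy hcax, by simp⟩

theorem exists_isRainbowThroughApex_of_length (hc : ProperColoring G c)
    (hE : ∀ p ∈ E, G.Adj a p.1 ∧ p.2 ≠ a ∧ G.Adj p.1 p.2)
    (hdeg : ∀ p ∈ E, D < #{q ∈ E | q.1 = p.1} ∧ D < #{q ∈ E | q.2 = p.2})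
    {x₀ : V} (hx₀ : x₀ ∈ E.image Prod.fst) :
    ∀ j, 6 * j ≤ D → ∃ u ∈ E.image Prod.fst, ∃ w : G.Walk u x₀,
      IsRainbowThroughApex c a w ∧ w.length = 2 * j
  | 0, _ => by
    obtain ⟨p, hp, rfl⟩ := mem_image.mp hx₀
    exact ⟨_, hx₀, .nil, isRainbowThroughApex_nil (hE p hp).1, rfl⟩
  | j + 1, hj => by
    obtain ⟨u, hu, w, hw, hlen⟩ := exists_isRainbowThroughApex_of_length hc hE hdeg hx₀ j (by omega)
    obtain ⟨x, hx, w', hw', hlen'⟩ :=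
      exists_isRainbowThroughApex_extension hc hE hdeg hw hu (by omega)
    exact ⟨x, hx, w', hw', by omega⟩

theorem hasRainbowCycle_of_forall_lt_card_fibers (hc : ProperColoring G c) {k : ℕ} (hk : 2 ≤ k)
    (hE : ∀ p ∈ E, G.Adj a p.1 ∧ p.2 ≠ a ∧ G.Adj p.1 p.2) (hne : E.Nonempty)
    (hdeg : ∀ p ∈ E, 6 * k < #{q ∈ E | q.1 = p.1} ∧ 6 * k < #{q ∈ E | q.2 = p.2}) :
    HasRainbowCycle G c (2 * k) := by
  obtain ⟨p₀, hp₀⟩ := hne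
  obtain ⟨u, hu, w, hw, hlen⟩ := exists_isRainbowThroughApex_of_length hc hE hdeg
    (mem_image_of_mem Prod.fst hp₀) (k - 1) (by omega)
  obtain ⟨p, hp, rfl⟩ := mem_image.mp hu
  have := hw.hasRainbowCycle hc (hE p hp).1 (hE p₀ hp₀).1 (by omega)
  rwa [hlen, show 2 * (k - 1) + 2 = 2 * k by omega] at this

end GreedyPath

/-- in a properly coloured graph with no rainbow `C_{2k}`, with
`X = N(a)` and `Y = N(N(a)) \ {a}`, the number of edges between `X` and `Y`
is at most `C·(|X| + |Y| + 1)` for a constant `C = C(k)`. -/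
theorem edges_between_nbhd_and_second_nbhd (k : ℕ) (hk : 2 ≤ k) :
    ∃ C : ℕ, ∀ (V : Type) [Fintype V] (G : SimpleGraph V) (γ : Type) (c : Sym2 V → γ),
      ProperColoring G c → ¬ HasRainbowCycle G c (2 * k) →
      ∀ a : V,
        {p : V × V | p.1 ∈ G.neighborSet a ∧
            p.2 ∈ {y | y ≠ a ∧ ∃ x ∈ G.neighborSet a, G.Adj x y} ∧
            G.Adj p.1 p.2}.ncard
          ≤ C * ((G.neighborSet a).ncard
              + {y | y ≠ a ∧ ∃ x ∈ G.neighborSet a, G.Adj x y}.ncard + 1) := by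
  classical
  refine ⟨6 * k, fun V _ G γ c hc hfree a => ?_⟩
  set X := G.neighborSet a
  set Y := {y | y ≠ a ∧ ∃ x ∈ X, G.Adj x y}
  set S := {p : V × V | p.1 ∈ X ∧ p.2 ∈ Y ∧ G.Adj p.1 p.2}
  by_contra! hmany
  set E := (Set.toFinite S).toFinset
  have hX : #(E.image Prod.fst) ≤ X.ncard := by
    rw [← Set.ncard_coe_finset]
    exact Set.ncard_le_ncard (by intro x; simp +contextual [E, S]) (Set.toFinite X)
  have hY : #(E.image Prod.snd) ≤ Y.ncard := by
    rw [← Set.ncard_coe_finset]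
    exact Set.ncard_le_ncard (by intro y; simp +contextual [E, S]) (Set.toFinite Y)
  obtain ⟨E', hE', hne, hdeg⟩ := exists_subset_forall_lt_card_fibers (6 * k) E Prod.fst Prod.snd
    (calc 6 * k * (#(E.image Prod.fst) + #(E.image Prod.snd))
        ≤ 6 * k * (X.ncard + Y.ncard + 1) := Nat.mul_le_mul_left _ (by omega)
      _ < S.ncard := hmany
      _ = #E := Set.ncard_eq_toFinset_card S)
  refine hfree (hasRainbowCycle_of_forall_lt_card_fibers (a := a) hc hk (fun p hp => ?_) hne hdeg)
  obtain ⟨hpX, ⟨hpa, -⟩, hp⟩ := (Set.toFinite S).mem_toFinset.mp (hE' hp)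
  exact ⟨hpX, hpa, hp⟩
end

section
/- Let k ≥ 2 and let G be a properly edge-coloured graph containing no rainbow cycle of length 2k. Call a pair of vertices x,y bad if they have at least 100k common neighbours in G. Fix a vertex a, and let y be any vertex such that the pair a,y is bad. Then the graph H_y on vertex set N(y), with zz' an edge whenever the pair z,z' is bad, contains no path with k−1 edges. -/
open SimpleGraph

/-- A pair of vertices is *bad* (w.r.t. `k`) if it has at least `100k` common neighbours. -/
def BadPair {V : Type*} (G : SimpleGraph V) (k : ℕ) (x y : V) : Prop :=
  100 * k ≤ (G.neighborSet x ∩ G.neighborSet y).ncard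

/-- The colours of edges at a fixed vertex are injective; hence the set of neighbours
whose edge colour lies in a list `L` has size at most `L.length`. -/
lemma fiber_ncard_le {V γ : Type*} (G : SimpleGraph V) (c : Sym2 V → γ)
    (hp : ProperColoring G c) (u : V) (L : List γ) :
    {w | G.Adj u w ∧ c s(u, w) ∈ L}.ncard ≤ L.length := by
  classical
  have h1 : {w | G.Adj u w ∧ c s(u, w) ∈ L}.ncard ≤ (↑L.toFinset : Set γ).ncard := by
    apply Set.ncard_le_ncard_of_injOn (fun w => c s(u, w))
    · intro w hw
      simp only [List.coe_toFinset, Set.mem_setOf_eq]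
      exact hw.2
    · intro w hw w' hw' hcc
      by_contra hne
      have hedge : s(u, w) ≠ s(u, w') := fun h => hne (Sym2.congr_right.mp h)
      exact hp s(u, w) s(u, w') (G.mem_edgeSet.2 hw.1) (G.mem_edgeSet.2 hw'.1) hedge
        ⟨u, by simp, by simp⟩ hcc
  calc {w | G.Adj u w ∧ c s(u, w) ∈ L}.ncard ≤ (↑L.toFinset : Set γ).ncard := h1
    _ = L.toFinset.card := Set.ncard_coe_finset _
    _ ≤ L.length := L.toFinset_card_le

/-- if `G` is properly coloured with no rainbow `C_{2k}`, `a, y` is a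
bad pair, then the auxiliary graph on `N(y)` whose edges are the bad pairs contains
no path with `k - 1` edges (i.e. on `k` vertices). -/
theorem no_bad_path_in_neighborhood (k : ℕ) (hk : 2 ≤ k) (V : Type) [Fintype V]
    (G : SimpleGraph V) (γ : Type) (c : Sym2 V → γ)
    (hp : ProperColoring G c) (hr : ¬ HasRainbowCycle G c (2 * k))
    (a y : V) (hay : BadPair G k a y) :
    ¬ ∃ z : ℕ → V,
        (∀ i, i < k → G.Adj y (z i)) ∧
        (∀ i j, i < k → j < k → z i = z j → i = j) ∧
        (∀ i, i + 1 < k → BadPair G k (z i) (z (i + 1))) := by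
  classical
  rintro ⟨z, hadj, hinj, hbad⟩
  have hyz : ∀ j, j < k → y ≠ z j := fun j hj => (hadj j hj).ne
  have hy0 : G.Adj y (z 0) := hadj 0 (by omega)
  -- Greedy construction of the second half of the rainbow cycle.
  have key : ∀ d : ℕ, ∀ i : ℕ, i + d + 1 = k →
      ∃ p : G.Walk (z i) y, p.IsPath ∧ p.length = 2 * d + 1 ∧
        (∀ j, j < i → z j ∉ p.support) ∧
        (c s(y, z 0) :: p.edges.map c).Nodup := by
    intro d
    induction d with
    | zero =>
      intro i hi
      have hik : i < k := by omega
      have h1 : G.Adj (z i) y := (hadj i hik).symm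
      refine ⟨Walk.cons h1 Walk.nil, ?_, by simp, ?_, ?_⟩
      · simp [Walk.isPath_def, (hyz i hik).symm]
      · intro j hj
        have hjk : j < k := by omega
        have hji : z j ≠ z i := fun h => by
          have := hinj j i hjk hik h; omega
        simp [Walk.support_cons, hji, (hyz j hjk).symm]
      · -- two colours: c s(y, z0) and c s(z i, y); both edges contain y
        have h0k : (0:ℕ) < k := by omega
        have hne : s(y, z 0) ≠ s(z i, y) := by
          intro h
          rw [Sym2.eq_iff] at h
          rcases h with ⟨h1', h2'⟩ | ⟨h1', h2'⟩
          · exact hyz i hik h1'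
          · have : (0:ℕ) = i := hinj 0 i h0k hik h2'
            omega
        have := hp s(y, z 0) s(z i, y) (G.mem_edgeSet.2 hy0) (G.mem_edgeSet.2 h1)
          hne ⟨y, by simp, by simp⟩
        simp [this]
    | succ d ih =>
      intro i hi
      obtain ⟨p, hpath, hlen, hzsup, hnodup⟩ := ih (i + 1) (by omega)
      have hik : i < k := by omega
      have hik1 : i + 1 < k := by omega
      have hzi1 : z i ≠ z (i + 1) := fun h => by
        have := hinj i (i + 1) hik hik1 h; omega
      -- choose the new intermediate vertex w
      set Lcols : List γ := c s(y, z 0) :: p.edges.map c with hLcols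
      have hLlen : Lcols.length = 2 * d + 2 := by
        simp [hLcols, hlen]
      set N : Set V := G.neighborSet (z i) ∩ G.neighborSet (z (i + 1)) with hN
      set B : Set V := {v | v ∈ p.support} ∪ (z '' ↑(Finset.range k)) ∪
        ({w | G.Adj (z i) w ∧ c s(z i, w) ∈ Lcols} ∪
         {w | G.Adj (z (i + 1)) w ∧ c s(z (i + 1), w) ∈ Lcols}) with hB
      have hBcard : B.ncard ≤ (2 * d + 2) + k + ((2 * d + 2) + (2 * d + 2)) := by
        have h1 : {v | v ∈ p.support}.ncard ≤ 2 * d + 2 := by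
          have : {v | v ∈ p.support} = ↑p.support.toFinset := by
            ext v; simp
          rw [this, Set.ncard_coe_finset]
          calc p.support.toFinset.card ≤ p.support.length := p.support.toFinset_card_le
            _ = 2 * d + 2 := by rw [Walk.length_support, hlen]
        have h2 : (z '' ↑(Finset.range k)).ncard ≤ k := by
          calc (z '' ↑(Finset.range k)).ncard ≤ (↑(Finset.range k) : Set ℕ).ncard :=
                Set.ncard_image_le (Set.toFinite _)
            _ = k := by rw [Set.ncard_coe_finset, Finset.card_range]
        have h3 := fiber_ncard_le G c hp (z i) Lcols
        have h4 := fiber_ncard_le G c hp (z (i + 1)) Lcols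
        rw [hLlen] at h3 h4
        calc B.ncard ≤ ({v | v ∈ p.support} ∪ z '' ↑(Finset.range k)).ncard +
              ({w | G.Adj (z i) w ∧ c s(z i, w) ∈ Lcols} ∪
               {w | G.Adj (z (i + 1)) w ∧ c s(z (i + 1), w) ∈ Lcols}).ncard :=
              Set.ncard_union_le _ _
          _ ≤ ({v | v ∈ p.support}.ncard + (z '' ↑(Finset.range k)).ncard) +
              ({w | G.Adj (z i) w ∧ c s(z i, w) ∈ Lcols}.ncard +
               {w | G.Adj (z (i + 1)) w ∧ c s(z (i + 1), w) ∈ Lcols}.ncard) :=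
              Nat.add_le_add (Set.ncard_union_le _ _) (Set.ncard_union_le _ _)
          _ ≤ (2 * d + 2) + k + ((2 * d + 2) + (2 * d + 2)) := by
              omega
      have hNcard : 100 * k ≤ N.ncard := hbad i hik1
      have hex : (N \ B).Nonempty := by
        rw [Set.diff_nonempty]
        intro hsub
        have := Set.ncard_le_ncard hsub (Set.toFinite B)
        omega
      obtain ⟨w, hwN, hwB⟩ := hex
      have hw1 : G.Adj (z i) w := hwN.1
      have hw2 : G.Adj (z (i + 1)) w := hwN.2
      have hwsup : w ∉ p.support := fun h => hwB (Or.inl (Or.inl h))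
      have hwz : ∀ j, j < k → w ≠ z j := fun j hj h =>
        hwB (Or.inl (Or.inr ⟨j, by simp [hj], h.symm⟩))
      have hwc1 : c s(z i, w) ∉ Lcols := fun h => hwB (Or.inr (Or.inl ⟨hw1, h⟩))
      have hwc2 : c s(z (i + 1), w) ∉ Lcols := fun h => hwB (Or.inr (Or.inr ⟨hw2, h⟩))
      -- build the new walk
      refine ⟨Walk.cons hw1 (Walk.cons hw2.symm p), ?_, ?_, ?_, ?_⟩
      · -- IsPath
        refine Walk.IsPath.cons (Walk.IsPath.cons hpath hwsup) ?_
        simp only [Walk.support_cons, List.mem_cons]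
        rintro (h | h)
        · exact hwz i hik h.symm
        · exact hzsup i (by omega) h
      · simp [hlen]; ring
      · intro j hj
        have hjk : j < k := by omega
        simp only [Walk.support_cons, List.mem_cons]
        rintro (h | h | h)
        · have := hinj j i hjk hik h; omega
        · exact hwz j hjk h.symm
        · exact hzsup j (by omega) h
      · -- Nodup of colours
        have hc12 : c s(z i, w) ≠ c s(w, z (i + 1)) := by
          have hne : s(z i, w) ≠ s(w, z (i + 1)) := by
            intro h
            rw [Sym2.eq_iff] at h
            rcases h with ⟨h1', h2'⟩ | ⟨h1', h2'⟩
            · exact hw1.ne h1'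
            · exact hzi1 h1'
          exact hp s(z i, w) s(w, z (i + 1)) (G.mem_edgeSet.2 hw1)
            (G.mem_edgeSet.2 hw2.symm) hne ⟨w, by simp, by simp⟩
        have hsw : s(w, z (i + 1)) = s(z (i + 1), w) := Sym2.eq_swap
        have hwc2' : c s(w, z (i + 1)) ∉ Lcols := by rw [hsw]; exact hwc2
        rw [hLcols] at hnodup hwc1 hwc2'
        simp only [List.mem_cons, not_or] at hwc1 hwc2'
        have hn := List.nodup_cons.mp hnodup
        simp only [Walk.edges_cons, List.map_cons, List.nodup_cons, List.mem_cons, not_or]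
        exact ⟨⟨fun h => hwc1.1 h.symm, fun h => hwc2'.1 h.symm, hn.1⟩,
          ⟨hc12, hwc1.2⟩, hwc2'.2, hn.2⟩
  -- assemble the rainbow cycle
  obtain ⟨p, hpath, hlen, _, hnodup⟩ := key (k - 1) 0 (by omega)
  apply hr
  refine ⟨y, Walk.cons hy0 p, ?_, ?_, ?_⟩
  · rw [Walk.cons_isCycle_iff]
    refine ⟨hpath, fun h => ?_⟩
    have : c s(y, z 0) ∈ p.edges.map c := List.mem_map_of_mem (f := c) h
    exact (List.nodup_cons.mp hnodup).1 this
  · simp [hlen]; omega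
  · simpa using hnodup
end

section
/- For every integer k ≥ 2 there is a constant C = C(k) such that every properly edge-coloured graph on n vertices with no rainbow cycle of length 2k contains at most C·n^2 paths of length 2 (as subgraphs). -/
open SimpleGraph

/-!
Write `w m` for the number of walks of length `m`, so `w 0 = n` and the paths of length two
number at most `w 2`. Cauchy–Schwarz gives `w (a + b) ^ 2 ≤ w (2a) * w (2b)`, so `m ↦ w (2m)`
is log-convex, and also `w (2k) ≤ n · hom(C_{2k})`, where `hom(C_{2k})` counts closed walks of
length `2k`. Without a rainbow `C_{2k}`, a closed walk of length `2k` repeats a vertex or repeats a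
colour on two of its edges. Deleting a suitable vertex leaves a walk of length `2k - 2` which,
together with two positions, determines the closed walk: the deleted vertex is either the repeated
one or, by properness, the neighbour reached along the repeated colour. So
`w (2k) ≤ 8k² · n · w (2k - 2)`, and log-convexity turns this into `w 2 ≤ 8k² · n²`.
-/

open Finset

def IsLogConvexSeq (a : ℕ → ℕ) : Prop := ∀ m, a (m + 1) ^ 2 ≤ a m * a (m + 2)

namespace IsLogConvexSeq

variable {a : ℕ → ℕ}

theorem pos (ha : IsLogConvexSeq a) (h1 : 0 < a 1) : ∀ m, 0 < a m := by
  have hnbrs (m : ℕ) (h : 0 < a (m + 1)) : 0 < a m ∧ 0 < a (m + 2) :=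
    CanonicallyOrderedAdd.mul_pos.mp ((pow_pos h 2).trans_le (ha m))
  have hsucc (m : ℕ) : 0 < a (m + 1) := by
    induction m with
    | zero => exact h1
    | succ m ih => exact (hnbrs m ih).2
  rintro (_ | m)
  · exact (hnbrs 0 h1).1
  · exact hsucc m

theorem mul_le_mul (ha : IsLogConvexSeq a) (hpos : ∀ m, 0 < a m) {i j : ℕ} (hij : i ≤ j) :
    a (i + 1) * a j ≤ a i * a (j + 1) := by
  induction j, hij using Nat.le_induction with
  | base => rw [mul_comm]
  | succ j _ ih =>
    refine Nat.le_of_mul_le_mul_right ?_ (Nat.mul_pos (hpos j) (hpos (j + 1)))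
    calc a (i + 1) * a (j + 1) * (a j * a (j + 1)) = a (i + 1) * a j * a (j + 1) ^ 2 := by ring
      _ ≤ a i * a (j + 1) * (a j * a (j + 2)) := Nat.mul_le_mul ih (ha j)
      _ = a i * a (j + 1 + 1) * (a j * a (j + 1)) := by ring

theorem apply_one_pow_succ_le (ha : IsLogConvexSeq a) (hpos : ∀ m, 0 < a m) (m : ℕ) :
    a 1 ^ (m + 1) ≤ a 0 ^ m * a (m + 1) := by
  induction m with
  | zero => simp
  | succ m ih =>
    calc a 1 ^ (m + 2) = a 1 ^ (m + 1) * a 1 := pow_succ _ _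
      _ ≤ a 0 ^ m * a (m + 1) * a 1 := Nat.mul_le_mul_right _ ih
      _ = a 0 ^ m * (a (0 + 1) * a (m + 1)) := by ring
      _ ≤ a 0 ^ m * (a 0 * a (m + 2)) :=
        Nat.mul_le_mul_left _ (ha.mul_le_mul hpos (m + 1).zero_le)
      _ = a 0 ^ (m + 1) * a (m + 2) := by ring

theorem apply_pow_succ_le (ha : IsLogConvexSeq a) (hpos : ∀ m, 0 < a m) (m : ℕ) :
    a m ^ (m + 1) ≤ a 0 * a (m + 1) ^ m := by
  have key : ∀ i ≤ m, a i * a m ^ i ≤ a 0 * a (m + 1) ^ i := by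
    intro i hi
    induction i with
    | zero => simp
    | succ i ih =>
      calc a (i + 1) * a m ^ (i + 1) = a (i + 1) * a m * a m ^ i := by ring
        _ ≤ a i * a (m + 1) * a m ^ i := Nat.mul_le_mul_right _ (ha.mul_le_mul hpos (by omega))
        _ = a (m + 1) * (a i * a m ^ i) := by ring
        _ ≤ a (m + 1) * (a 0 * a (m + 1) ^ i) := Nat.mul_le_mul_left _ (ih (by omega))
        _ = a 0 * a (m + 1) ^ (i + 1) := by ring
  simpa [pow_succ'] using key m le_rfl

theorem apply_one_le_mul_sq (ha : IsLogConvexSeq a) {k C : ℕ} (hk : 0 < k)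
    (hstep : a k ≤ C * a 0 * a (k - 1)) : a 1 ≤ C * a 0 ^ 2 := by
  obtain ⟨m, rfl⟩ : ∃ m, k = m + 1 := ⟨k - 1, by omega⟩
  rw [Nat.add_sub_cancel] at hstep
  rcases Nat.eq_zero_or_pos (a 1) with h1 | h1
  · simp [h1]
  have hpos := ha.pos h1
  have htop : a (m + 1) ≤ C ^ (m + 1) * a 0 ^ (m + 2) := by
    refine Nat.le_of_mul_le_mul_right ?_ (pow_pos (hpos (m + 1)) m)
    calc a (m + 1) * a (m + 1) ^ m = a (m + 1) ^ (m + 1) := (pow_succ' _ _).symm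
      _ ≤ (C * a 0 * a m) ^ (m + 1) := Nat.pow_le_pow_left hstep _
      _ = (C * a 0) ^ (m + 1) * a m ^ (m + 1) := mul_pow _ _ _
      _ ≤ (C * a 0) ^ (m + 1) * (a 0 * a (m + 1) ^ m) :=
        Nat.mul_le_mul_left _ (ha.apply_pow_succ_le hpos m)
      _ = C ^ (m + 1) * a 0 ^ (m + 2) * a (m + 1) ^ m := by ring
  refine (Nat.pow_le_pow_iff_left m.succ_ne_zero).mp ?_
  calc a 1 ^ (m + 1) ≤ a 0 ^ m * a (m + 1) := ha.apply_one_pow_succ_le hpos m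
    _ ≤ a 0 ^ m * (C ^ (m + 1) * a 0 ^ (m + 2)) := Nat.mul_le_mul_left _ htop
    _ = (C * a 0 ^ 2) ^ (m + 1) := by ring

end IsLogConvexSeq

theorem ZMod.injective_of_ne_of_ne_add_one {n : ℕ} {β : Type*} {g : ZMod (n + 3) → β}
    (h : ∀ i j, i ≠ j → i ≠ j + 1 → g i ≠ g j) : Function.Injective g := by
  intro i j hij
  by_contra hne
  by_cases hi : i = j + 1
  · refine h j i (Ne.symm hne) (fun hj => ?_) hij.symm
    have htwo : (2 : ZMod (n + 3)) = 0 := by linear_combination -hi - hj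
    have := congrArg ZMod.val htwo
    rw [ZMod.val_ofNat, Nat.mod_eq_of_lt (by omega), ZMod.val_zero] at this
    omega
  · exact h i j hne hi hij

theorem ProperColoring.eq_of_color_eq {V γ : Type*} {G : SimpleGraph V} {c : Sym2 V → γ}
    (hc : ProperColoring G c) {u v w : V} (hv : G.Adj u v) (hw : G.Adj u w)
    (h : c s(u, v) = c s(u, w)) : v = w := by
  by_contra hne
  exact hc _ _ hv hw (fun he => hne (Sym2.congr_right.mp he))
    ⟨u, Sym2.mem_mk_left _ _, Sym2.mem_mk_left _ _⟩ h

namespace SimpleGraph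

theorem cycleGraph.exists_eq_mk_of_mem_edgeSet {n : ℕ} {e : Sym2 (Fin (n + 2))}
    (he : e ∈ (cycleGraph (n + 2)).edgeSet) : ∃ i, e = s(i, i + 1) := by
  induction e using Sym2.ind with
  | _ a b =>
  rcases cycleGraph_adj.mp he with h | h
  · exact ⟨b, by rw [← h, add_sub_cancel, Sym2.eq_swap]⟩
  · exact ⟨a, by rw [← h, add_sub_cancel]⟩

section Sequences

variable {V : Type*} {G : SimpleGraph V}

variable (G) in
def IsWalkSeq {m : ℕ} (f : Fin (m + 1) → V) : Prop :=
  ∀ i : Fin m, G.Adj (f i.castSucc) (f i.succ)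

variable (G) in
def IsClosedWalkSeq {K : ℕ} (f : ZMod K → V) : Prop :=
  ∀ i, G.Adj (f i) (f (i + 1))

def walkOfSeq :
    {m : ℕ} → (f : Fin (m + 1) → V) → G.IsWalkSeq f → G.Walk (f 0) (f (Fin.last m))
  | 0, _, _ => Walk.nil
  | _ + 1, f, hf => Walk.cons (hf 0) (walkOfSeq (Fin.tail f) fun i => hf i.succ)

theorem length_walkOfSeq {m : ℕ} (f : Fin (m + 1) → V) (hf : G.IsWalkSeq f) :
    (walkOfSeq f hf).length = m := by
  induction m with
  | zero => rfl
  | succ m ih => exact congrArg (· + 1) (ih _ _)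

theorem getVert_walkOfSeq {m : ℕ} (f : Fin (m + 1) → V) (hf : G.IsWalkSeq f) (i : Fin (m + 1)) :
    (walkOfSeq f hf).getVert i = f i := by
  induction m with
  | zero => rw [Fin.fin_one_eq_zero i]; rfl
  | succ m ih =>
    cases i using Fin.cases with
    | zero => rfl
    | succ i => exact ih _ _ i

theorem Walk.isClosedWalkSeq_getVert {K : ℕ} [NeZero K] {v : V} (p : G.Walk v v)
    (hp : p.length = K) : G.IsClosedWalkSeq fun i : ZMod K => p.getVert i.val := by
  intro i
  have hi := ZMod.val_lt i
  have hwrap : p.getVert ((i.val + 1) % K) = p.getVert (i.val + 1) := by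
    rcases (show i.val + 1 ≤ K from hi).lt_or_eq with h | h
    · rw [Nat.mod_eq_of_lt h]
    · rw [h, Nat.mod_self, Walk.getVert_zero, ← hp, Walk.getVert_length]
  dsimp only
  rw [ZMod.val_add, ZMod.val_one_eq_one_mod, Nat.add_mod_mod, hwrap]
  exact p.adj_getVert_succ (by omega)

def removeCyclic {m : ℕ} (d : ZMod (m + 2)) (f : ZMod (m + 2) → V) : Fin (m + 1) → V :=
  fun t => f (d + 1 + (t.val : ZMod (m + 2)))

theorem IsClosedWalkSeq.isWalkSeq_removeCyclic {m : ℕ} {f : ZMod (m + 2) → V}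
    (hf : G.IsClosedWalkSeq f) (d : ZMod (m + 2)) : G.IsWalkSeq (removeCyclic d f) := by
  intro i
  simpa [removeCyclic, add_assoc] using hf (d + 1 + (i.val : ZMod (m + 2)))

theorem apply_eq_of_removeCyclic_eq {m : ℕ} {d : ZMod (m + 2)} {f f' : ZMod (m + 2) → V}
    (h : removeCyclic d f = removeCyclic d f') {x : ZMod (m + 2)} (hx : x ≠ d) : f x = f' x := by
  have hlast : (x - (d + 1)).val ≠ m + 1 := by
    intro ht
    refine hx ?_
    have hxd : x - (d + 1) = ((m + 1 : ℕ) : ZMod (m + 2)) := by rw [← ht, ZMod.natCast_zmod_val]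
    have hzero : ((m + 2 : ℕ) : ZMod (m + 2)) = 0 := ZMod.natCast_self _
    push_cast at hxd hzero
    linear_combination hxd + hzero
  have hlt : (x - (d + 1)).val < m + 1 := by
    have := ZMod.val_lt (x - (d + 1))
    omega
  simpa [removeCyclic] using congrFun h ⟨_, hlt⟩

theorem eq_of_removeCyclic_eq {m : ℕ} {d : ZMod (m + 2)} {f f' : ZMod (m + 2) → V}
    (h : removeCyclic d f = removeCyclic d f') (hd : f d = f' d) : f = f' := by
  funext x
  by_cases hx : x = d
  · rw [hx, hd]
  · exact apply_eq_of_removeCyclic_eq h hx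

theorem hasRainbowCycle_of_injective {γ : Type*} {c : Sym2 V → γ} {n : ℕ}
    {f : ZMod (n + 3) → V} (hf : G.IsClosedWalkSeq f) (hinj : Function.Injective f)
    (hrainbow : Function.Injective fun i => c s(f i, f (i + 1))) :
    HasRainbowCycle G c (n + 3) := by
  let φ : cycleGraph (n + 3) →g G := ⟨f, fun {a b} hab => by
    rcases cycleGraph_adj.mp hab with h | h
    · rw [← sub_add_cancel a b, h, add_comm]; exact (hf b).symm
    · rw [← sub_add_cancel b a, h, add_comm]; exact hf a⟩
  have hcycle := cycleGraph.isCycle_cycle (n := n)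
  refine ⟨φ 0, (cycleGraph.cycle n).map φ, (Walk.isCycle_map_iff_of_injective hinj).mpr hcycle,
    by simp, ?_⟩
  rw [Walk.edges_map, List.map_map]
  refine hcycle.edges_nodup.map_on fun x hx y hy hxy => ?_
  obtain ⟨i, rfl⟩ := cycleGraph.exists_eq_mk_of_mem_edgeSet (Walk.edges_subset_edgeSet _ hx)
  obtain ⟨j, rfl⟩ := cycleGraph.exists_eq_mk_of_mem_edgeSet (Walk.edges_subset_edgeSet _ hy)
  rw [hrainbow hxy]

end Sequences

section Counting

variable {V : Type*} [Fintype V] [DecidableEq V] (G : SimpleGraph V) [DecidableRel G.Adj]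

instance {m : ℕ} : DecidablePred (G.IsWalkSeq (m := m)) :=
  fun _ => Fintype.decidableForallFintype

instance {K : ℕ} [NeZero K] : DecidablePred (G.IsClosedWalkSeq (K := K)) :=
  fun _ => Fintype.decidableForallFintype

def walkCount (m : ℕ) : ℕ := ∑ u, ∑ v, (G.adjMatrix ℕ ^ m) u v

theorem walkCount_zero : G.walkCount 0 = Fintype.card V := by
  simp [walkCount, Matrix.one_apply]

theorem walkCount_add (a b : ℕ) : G.walkCount (a + b) =
    ∑ w, (∑ u, (G.adjMatrix ℕ ^ a) u w) * ∑ v, (G.adjMatrix ℕ ^ b) v w := by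
  have hsymm := (G.isSymm_adjMatrix (α := ℕ)).pow b
  calc G.walkCount (a + b)
      = ∑ u, ∑ v, ∑ w, (G.adjMatrix ℕ ^ a) u w * (G.adjMatrix ℕ ^ b) w v := by
        simp only [walkCount, pow_add, Matrix.mul_apply]
    _ = ∑ w, ∑ u, ∑ v, (G.adjMatrix ℕ ^ a) u w * (G.adjMatrix ℕ ^ b) w v :=
        (sum_congr rfl fun _ _ => sum_comm).trans sum_comm
    _ = _ := by simp only [sum_mul_sum, hsymm.apply _ (_ : V)]

theorem isLogConvexSeq_walkCount : IsLogConvexSeq fun m => G.walkCount (2 * m) := by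
  intro m
  have hsq (a : ℕ) : G.walkCount (2 * a) = ∑ w, (∑ u, (G.adjMatrix ℕ ^ a) u w) ^ 2 := by
    simp only [two_mul, walkCount_add, sq]
  dsimp only
  rw [show 2 * (m + 1) = m + (m + 2) by ring, walkCount_add, hsq, hsq]
  exact sum_mul_sq_le_sq_mul_sq _ _ _

theorem walkCount_two_mul_le (k : ℕ) :
    G.walkCount (2 * k) ≤ Fintype.card V * (G.adjMatrix ℕ ^ (2 * k)).trace := by
  have hsymm := (G.isSymm_adjMatrix (α := ℕ)).pow k
  rw [two_mul, walkCount_add, Matrix.trace, mul_sum]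
  refine sum_le_sum fun w _ => ?_
  calc (∑ u, (G.adjMatrix ℕ ^ k) u w) * ∑ u, (G.adjMatrix ℕ ^ k) u w
      = (∑ u, (G.adjMatrix ℕ ^ k) u w) ^ 2 := (sq _).symm
    _ ≤ Fintype.card V * ∑ u, (G.adjMatrix ℕ ^ k) u w ^ 2 := sq_sum_le_card_mul_sum_sq
    _ = Fintype.card V * (G.adjMatrix ℕ ^ (k + k)) w w := by
      simp only [pow_add, Matrix.mul_apply, sq, hsymm.apply]

theorem card_isWalkSeq_le (m : ℕ) :
    #{f : Fin (m + 1) → V | G.IsWalkSeq f} ≤ G.walkCount m := by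
  have hinj : Function.Injective fun f : {f : Fin (m + 1) → V // G.IsWalkSeq f} =>
      (⟨_, _, walkOfSeq f.1 f.2, length_walkOfSeq f.1 f.2⟩ :
        Σ u v, {p : G.Walk u v // p.length = m}) := by
    intro f f' h
    ext i
    simpa only [getVert_walkOfSeq] using congrArg (fun s => s.2.2.1.getVert i) h
  rw [← Fintype.card_subtype]
  refine (Fintype.card_le_of_injective _ hinj).trans_eq ?_
  simp only [Fintype.card_sigma, walkCount, adjMatrix_pow_apply_eq_card_walk]
  rfl

theorem ncard_paths_two_le :
    {p : V × V × V | G.Adj p.1 p.2.1 ∧ G.Adj p.2.1 p.2.2 ∧ p.1 ≠ p.2.2}.ncard ≤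
      G.walkCount 2 := by
  refine le_trans ?_ (G.card_isWalkSeq_le 2)
  rw [← Set.ncard_coe_finset]
  refine Set.ncard_le_ncard_of_injOn (fun p => ![p.1, p.2.1, p.2.2]) (fun p hp => ?_)
    (fun p _ q _ h => ?_)
  · simp [IsWalkSeq, Fin.forall_fin_two, hp.1, hp.2.1]
  · simpa [Prod.ext_iff, funext_iff, Fin.forall_fin_succ] using h

theorem trace_adjMatrix_pow_le (K : ℕ) [NeZero K] :
    (G.adjMatrix ℕ ^ K).trace ≤ #{f : ZMod K → V | G.IsClosedWalkSeq f} := by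
  rw [card_eq_sum_card_fiberwise (f := fun f => f 0) (t := univ) fun _ _ => mem_univ _]
  refine sum_le_sum fun v _ => ?_
  rw [Matrix.diag_apply, adjMatrix_pow_apply_eq_card_walk, ← card_univ]
  refine card_le_card_of_injOn (fun p i => p.1.getVert (ZMod.val i)) ?_ ?_
  · intro p _
    simpa using p.1.isClosedWalkSeq_getVert p.2
  · intro p _ q _ hpq
    refine Subtype.ext (Walk.ext_getVert_le_length (p.2.trans q.2.symm) fun k hk => ?_)
    rcases hk.lt_or_eq with hk | hk
    · simpa only [ZMod.val_natCast_of_lt (p.2 ▸ hk)] using congrFun hpq (k : ZMod K)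
    · rw [hk, Walk.getVert_length, p.2.trans q.2.symm, Walk.getVert_length]

theorem card_le_walkCount_of_injOn {m : ℕ} {S : Finset (ZMod (m + 2) → V)}
    (hS : ∀ f ∈ S, G.IsClosedWalkSeq f) (d : ZMod (m + 2))
    (hinj : Set.InjOn (removeCyclic d) (S : Set (ZMod (m + 2) → V))) : #S ≤ G.walkCount m := by
  refine (card_le_card_of_injOn _ (fun f hf => ?_) hinj).trans (G.card_isWalkSeq_le m)
  simpa using (hS f hf).isWalkSeq_removeCyclic d

variable {G}

theorem card_repeatedVertex_le {m : ℕ} (a d : ZMod (m + 2)) :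
    #{f : ZMod (m + 2) → V | G.IsClosedWalkSeq f ∧ a ≠ d ∧ f a = f d} ≤
      G.walkCount m := by
  refine card_le_walkCount_of_injOn G (fun f hf => (mem_filter.mp hf).2.1) d
    fun f hf f' hf' h => eq_of_removeCyclic_eq h ?_
  obtain ⟨-, -, had, hfa⟩ := mem_filter.mp hf
  obtain ⟨-, -, -, hfa'⟩ := mem_filter.mp hf'
  rw [← hfa, ← hfa']
  exact apply_eq_of_removeCyclic_eq h had

theorem card_repeatedColor_le {γ : Type*} [DecidableEq γ] {c : Sym2 V → γ}
    (hc : ProperColoring G c) {m : ℕ} (i j : ZMod (m + 2)) :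
    #{f : ZMod (m + 2) → V | G.IsClosedWalkSeq f ∧ i ≠ j ∧ i ≠ j + 1 ∧
      c s(f i, f (i + 1)) = c s(f j, f (j + 1))} ≤ G.walkCount m := by
  refine card_le_walkCount_of_injOn G (fun f hf => (mem_filter.mp hf).2.1) (j + 1)
    fun f hf f' hf' h => eq_of_removeCyclic_eq h ?_
  obtain ⟨-, hf, hij, hij', hcf⟩ := mem_filter.mp hf
  obtain ⟨-, hf', -, -, hcf'⟩ := mem_filter.mp hf'
  have : Fact (1 < m + 2) := ⟨by omega⟩
  have hj : f j = f' j := apply_eq_of_removeCyclic_eq h (by simp)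
  have hi : f i = f' i := apply_eq_of_removeCyclic_eq h hij'
  have hi' : f (i + 1) = f' (i + 1) :=
    apply_eq_of_removeCyclic_eq h fun h' => hij (add_right_cancel h')
  -- edge `i` avoids position `j + 1`, so its colour is known and properness pins down `f (j + 1)`
  refine hc.eq_of_color_eq (hf j) (hj ▸ hf' j) ?_
  rw [← hcf, hi, hi', hcf', hj]

theorem card_isClosedWalkSeq_le {γ : Type*} {c : Sym2 V → γ} {n : ℕ} (hc : ProperColoring G c)
    (hno : ¬ HasRainbowCycle G c (n + 3)) :
    #{f : ZMod (n + 3) → V | G.IsClosedWalkSeq f} ≤ 2 * (n + 3) ^ 2 * G.walkCount (n + 1) := by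
  classical
  let repeatedVertex (p : ZMod (n + 3) × ZMod (n + 3)) : Finset (ZMod (n + 3) → V) :=
    {f | G.IsClosedWalkSeq f ∧ p.1 ≠ p.2 ∧ f p.1 = f p.2}
  let repeatedColor (p : ZMod (n + 3) × ZMod (n + 3)) : Finset (ZMod (n + 3) → V) :=
    {f | G.IsClosedWalkSeq f ∧ p.1 ≠ p.2 ∧ p.1 ≠ p.2 + 1 ∧
      c s(f p.1, f (p.1 + 1)) = c s(f p.2, f (p.2 + 1))}
  have hcover : ({f | G.IsClosedWalkSeq f} : Finset (ZMod (n + 3) → V)) ⊆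
      univ.biUnion repeatedVertex ∪ univ.biUnion repeatedColor := by
    intro f hf
    replace hf : G.IsClosedWalkSeq f := (mem_filter.mp hf).2
    by_contra hnot
    simp only [mem_union, mem_biUnion, mem_univ, true_and, Prod.exists, not_or, not_exists,
      repeatedVertex, repeatedColor, mem_filter, hf, not_and] at hnot
    refine hno (hasRainbowCycle_of_injective hf (fun a b hab => ?_)
      (ZMod.injective_of_ne_of_ne_add_one fun i j hij hij' => hnot.2 i j hij hij'))
    by_contra hne
    exact hnot.1 a b hne hab
  calc _ ≤ #(univ.biUnion repeatedVertex) + #(univ.biUnion repeatedColor) :=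
        (card_le_card hcover).trans (card_union_le _ _)
    _ ≤ ∑ p, #(repeatedVertex p) + ∑ p, #(repeatedColor p) :=
        add_le_add card_biUnion_le card_biUnion_le
    _ ≤ ∑ _p : ZMod (n + 3) × ZMod (n + 3), G.walkCount (n + 1) +
          ∑ _p : ZMod (n + 3) × ZMod (n + 3), G.walkCount (n + 1) :=
        add_le_add (sum_le_sum fun p _ => card_repeatedVertex_le p.1 p.2)
          (sum_le_sum fun p _ => card_repeatedColor_le hc p.1 p.2)
    _ = 2 * (n + 3) ^ 2 * G.walkCount (n + 1) := by simp [ZMod.card]; ring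

end Counting

end SimpleGraph

/-- a properly edge-coloured graph on `n` vertices with no rainbow
`C_{2k}` contains at most `C·n²` paths of length 2, for a constant `C = C(k)`. -/
theorem count_paths_of_length_two (k : ℕ) (hk : 2 ≤ k) :
    ∃ C : ℕ, ∀ (V : Type) [Fintype V] (G : SimpleGraph V) (γ : Type) (c : Sym2 V → γ),
      ProperColoring G c → ¬ HasRainbowCycle G c (2 * k) →
      {p : V × V × V | G.Adj p.1 p.2.1 ∧ G.Adj p.2.1 p.2.2 ∧ p.1 ≠ p.2.2}.ncard
        ≤ C * Fintype.card V ^ 2 := by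
  refine ⟨8 * k ^ 2, fun V _ G γ c hc hno => ?_⟩
  classical
  obtain ⟨n, hn⟩ : ∃ n, 2 * k = n + 3 := ⟨2 * k - 3, by omega⟩
  have hstep :
      G.walkCount (2 * k) ≤ 8 * k ^ 2 * G.walkCount (2 * 0) * G.walkCount (2 * (k - 1)) :=
    calc G.walkCount (2 * k) ≤ Fintype.card V * (G.adjMatrix ℕ ^ (2 * k)).trace :=
          G.walkCount_two_mul_le k
      _ ≤ Fintype.card V * (2 * (n + 3) ^ 2 * G.walkCount (n + 1)) := by
          rw [hn]
          exact Nat.mul_le_mul_left _ ((G.trace_adjMatrix_pow_le _).trans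
            (card_isClosedWalkSeq_le hc (hn ▸ hno)))
      _ = 8 * k ^ 2 * G.walkCount (2 * 0) * G.walkCount (2 * (k - 1)) := by
          rw [mul_zero, walkCount_zero, show n + 1 = 2 * (k - 1) by omega, ← hn]
          ring
  calc _ ≤ G.walkCount (2 * 1) := G.ncard_paths_two_le
    _ ≤ 8 * k ^ 2 * G.walkCount (2 * 0) ^ 2 :=
        G.isLogConvexSeq_walkCount.apply_one_le_mul_sq (by omega) hstep
    _ = 8 * k ^ 2 * Fintype.card V ^ 2 := by rw [mul_zero, walkCount_zero]
end

section
/- Let k ≥ 2 and suppose G is a properly edge-coloured graph (on n vertices) with no rainbow cycle of length 2k in which no pair of vertices has 100k or more common neighbours (i.e., there is no bad pair). Then for every l ≥ 2 the number of cycles of length 2l+1 in G is at most 200k times the number of paths with 2l−1 edges in G. -/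
open SimpleGraph

lemma ncard_le_mul_ncard_aux {α β : Type*} [Fintype α] [Fintype β]
    (S : Set α) (T : Set β) (f : α → β) (m : ℕ)
    (hmap : ∀ x ∈ S, f x ∈ T)
    (hfib : ∀ b, {x ∈ S | f x = b}.ncard ≤ m) :
    S.ncard ≤ m * T.ncard := by
  classical
  rw [Set.ncard_eq_toFinset_card' S, Set.ncard_eq_toFinset_card' T]
  have h1 : S.toFinset.card ≤ m * (S.toFinset.image f).card := by
    apply Finset.card_le_mul_card_image
    intro a _
    have hcoe : ((S.toFinset.filter fun x => f x = a) : Set α) = {x ∈ S | f x = a} := by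
      ext x; simp
    calc (S.toFinset.filter fun x => f x = a).card
        = {x ∈ S | f x = a}.ncard := by rw [← hcoe, Set.ncard_coe_finset]
      _ ≤ m := hfib a
  refine h1.trans (Nat.mul_le_mul_left m (Finset.card_le_card ?_))
  intro b hb
  simp only [Finset.mem_image, Set.mem_toFinset] at hb ⊢
  obtain ⟨x, hx, rfl⟩ := hb
  exact hmap x hx


/-- in a properly coloured graph with no rainbow `C_{2k}` and no bad pair
(every two distinct vertices have fewer than `100k` common neighbours), the number of
cycles of length `2l+1` is at most `200k` times the number of paths with `2l-1` edges.
Cycles and paths are counted as (injective) vertex sequences. -/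
theorem odd_cycles_le_const_mul_paths (k l : ℕ) (hk : 2 ≤ k) (hl : 2 ≤ l)
    (V : Type) [Fintype V] (G : SimpleGraph V) (γ : Type) (c : Sym2 V → γ)
    (hp : ProperColoring G c) (hr : ¬ HasRainbowCycle G c (2 * k))
    (hgood : ∀ x y : V, x ≠ y → (G.neighborSet x ∩ G.neighborSet y).ncard < 100 * k) :
    {x : Fin (2 * l + 1) → V | Function.Injective x ∧
        ∀ i, G.Adj (x i) (x (i + 1))}.ncard
      ≤ 200 * k *
        {x : Fin (2 * l) → V | Function.Injective x ∧
          ∀ i : ℕ, ∀ h : i + 1 < 2 * l,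
            G.Adj (x ⟨i, Nat.lt_of_succ_lt h⟩) (x ⟨i + 1, h⟩)}.ncard := by
  classical
  have hl5 : 5 ≤ 2 * l + 1 := by omega
  apply ncard_le_mul_ncard_aux _ _ (fun x (j : Fin (2 * l)) => x j.succ)
  · -- image is in the path set
    rintro x ⟨hinj, hadj⟩
    refine ⟨hinj.comp (Fin.succ_injective _), ?_⟩
    intro i h
    have key := hadj (⟨i, Nat.lt_of_succ_lt h⟩ : Fin (2 * l)).succ
    have e1 : ((⟨i, Nat.lt_of_succ_lt h⟩ : Fin (2 * l)).succ : Fin (2 * l + 1)) + 1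
        = (⟨i + 1, h⟩ : Fin (2 * l)).succ := by
      apply Fin.ext
      simp [Fin.add_def, Fin.val_succ, Nat.mod_eq_of_lt (by omega : (1:ℕ) < 2 * l + 1),
        Nat.mod_eq_of_lt (by omega : i + 1 + 1 < 2 * l + 1)]
    rwa [e1] at key
  · -- fiber bound
    intro b
    rcases Set.eq_empty_or_nonempty
        {x ∈ {x : Fin (2 * l + 1) → V | Function.Injective x ∧
            ∀ i, G.Adj (x i) (x (i + 1))} |
          (fun j : Fin (2 * l) => x j.succ) = b} with he | ⟨x₀, hx₀S, hx₀f⟩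
    · rw [he]; simp
    have hb0 : b ⟨0, by omega⟩ = x₀ (⟨0, by omega⟩ : Fin (2 * l)).succ := by rw [← hx₀f]
    have hbl : b ⟨2 * l - 1, by omega⟩ = x₀ (⟨2 * l - 1, by omega⟩ : Fin (2 * l)).succ := by
      rw [← hx₀f]
    have hne : b ⟨0, by omega⟩ ≠ b ⟨2 * l - 1, by omega⟩ := by
      rw [hb0, hbl]
      intro hcon
      have := hx₀S.1 hcon
      have : ((⟨0, by omega⟩ : Fin (2 * l)).succ : Fin (2 * l + 1)).val
          = ((⟨2 * l - 1, by omega⟩ : Fin (2 * l)).succ : Fin (2 * l + 1)).val := by rw [this]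
      simp [Fin.val_succ] at this
      omega
    have hN : (G.neighborSet (b ⟨0, by omega⟩) ∩ G.neighborSet (b ⟨2 * l - 1, by omega⟩)).ncard
        ≤ 200 * k := by
      have := hgood _ _ hne
      omega
    refine le_trans (Set.ncard_le_ncard_of_injOn (fun x => x 0) ?_ ?_ (Set.toFinite _)) hN
    · rintro x ⟨⟨hinj, hadj⟩, hfx⟩
      constructor
      · -- x 0 ∈ N(b ⟨0, by omega⟩) : Adj (x 0) (x 1)
        have key := hadj 0
        have e0 : ((0 : Fin (2 * l + 1)) + 1) = ((⟨0, by omega⟩ : Fin (2 * l)).succ : Fin (2 * l + 1)) := by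
          apply Fin.ext
          simp [Fin.add_def, Fin.val_succ, Nat.mod_eq_of_lt (by omega : (1:ℕ) < 2 * l + 1)]
        rw [e0] at key
        have : x ((⟨0, by omega⟩ : Fin (2 * l)).succ) = b ⟨0, by omega⟩ := by rw [← hfx]
        rw [this] at key
        exact key.symm
      · -- x 0 ∈ N(b last) : Adj (x last) (x 0)
        have key := hadj (Fin.last (2 * l))
        have elast : (Fin.last (2 * l) : Fin (2 * l + 1)) + 1 = 0 := by
          apply Fin.ext
          simp [Fin.add_def, Fin.last, Nat.mod_eq_of_lt (by omega : (1:ℕ) < 2 * l + 1)]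
        have elast2 : (Fin.last (2 * l) : Fin (2 * l + 1))
            = ((⟨2 * l - 1, by omega⟩ : Fin (2 * l)).succ : Fin (2 * l + 1)) := by
          apply Fin.ext
          simp [Fin.last, Fin.val_succ]
          omega
        rw [elast, elast2] at key
        have : x ((⟨2 * l - 1, by omega⟩ : Fin (2 * l)).succ) = b ⟨2 * l - 1, by omega⟩ := by
          rw [← hfx]
        rw [this] at key
        exact key
    · rintro x ⟨hxS, hfx⟩ y ⟨hyS, hfy⟩ h0
      funext j
      refine Fin.cases ?_ ?_ j
      · exact h0
      · intro i
        have : (fun j : Fin (2 * l) => x j.succ) i = (fun j : Fin (2 * l) => y j.succ) i := by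
          rw [hfx, hfy]
        exact this
end

section
/- Let A be a Sidon set in Z_n partitioned into A_1 and A_2, and let G be the 4-partite graph with vertex classes X_{00}, X_{01}, X_{10}, X_{11}, each a copy of Z_n, where x ∈ X_{00} is joined to x+a_1 ∈ X_{10} (colour (a_1,1)) for a_1 ∈ A_1, x ∈ X_{00} to x+a_2 ∈ X_{01} (colour (a_2,2)) for a_2 ∈ A_2, x ∈ X_{10} to x+a_2 ∈ X_{11} (colour (a_2,2)) for a_2 ∈ A_2, and x ∈ X_{01} to x+a_1 ∈ X_{11} (colour (a_1,1)) for a_1 ∈ A_1. Then G is properly edge-coloured and contains no rainbow 4-cycle. -/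
/-!
Orient each edge from the class of lower rank to the class of higher rank. Its colour is then
`(tag, a)`, where `a` is the difference of the `ZMod n` coordinates and the tag says which class
coordinate flips; as `A1` and `A2` are disjoint, `a` alone determines the tag. At a vertex the tag
fixes the class of the neighbour and `a` its coordinate, so the colouring is proper. Around a
closed walk of length four the rank goes up twice and down twice, so the four differences satisfy
`a + b = a' + b'`, and the Sidon property forces two of them, hence two colours, to coincide.
-/

open SimpleGraph

/-- Vertex type of the Sidon-set construction: four classes `X_{00}, X_{01}, X_{10}, X_{11}`,
each a copy of `ZMod n`. -/
abbrev SidonV (n : ℕ) := (Fin 2 × Fin 2) × ZMod n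

/-- The "rank" of a class: `X_{00}` has rank 0, `X_{10}`, `X_{01}` rank 1, `X_{11}` rank 2. -/
def sidonRank {n : ℕ} (v : SidonV n) : ℕ := v.1.1.val + v.1.2.val

/-- The (oriented) edge relation of the Sidon construction. -/
def sidonRel {n : ℕ} (A1 A2 : Finset (ZMod n)) (u v : SidonV n) : Prop :=
  (u.1 = (0, 0) ∧ v.1 = (1, 0) ∧ v.2 - u.2 ∈ A1) ∨
  (u.1 = (0, 0) ∧ v.1 = (0, 1) ∧ v.2 - u.2 ∈ A2) ∨
  (u.1 = (1, 0) ∧ v.1 = (1, 1) ∧ v.2 - u.2 ∈ A2) ∨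
  (u.1 = (0, 1) ∧ v.1 = (1, 1) ∧ v.2 - u.2 ∈ A1)

/-- The 4-partite graph of the Sidon-set construction. -/
def sidonGraph {n : ℕ} (A1 A2 : Finset (ZMod n)) : SimpleGraph (SidonV n) where
  Adj u v := sidonRel A1 A2 u v ∨ sidonRel A1 A2 v u
  symm := ⟨by intro u v h; tauto⟩
  loopless := ⟨by
    intro v h
    rcases h with h | h <;>
      rcases h with ⟨h1, h2, -⟩ | ⟨h1, h2, -⟩ | ⟨h1, h2, -⟩ | ⟨h1, h2, -⟩ <;>
        rw [h1] at h2 <;> exact absurd h2 (by decide)⟩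

/-- The colour of a pair: the tag records whether it is an `A1`-type edge
(first class-coordinates differ) or an `A2`-type edge, and the second component
is the difference along the orientation from lower to higher rank. -/
def sidonColFun {n : ℕ} (u v : SidonV n) : Fin 2 × ZMod n :=
  ((if u.1.1 = v.1.1 then 1 else 0),
   if sidonRank u < sidonRank v then v.2 - u.2
   else if sidonRank v < sidonRank u then u.2 - v.2 else 0)

lemma sidonColFun_symm {n : ℕ} (u v : SidonV n) : sidonColFun u v = sidonColFun v u := by
  unfold sidonColFun
  refine Prod.ext ?_ ?_
  · by_cases h : u.1.1 = v.1.1 <;> simp [h, eq_comm]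
  · rcases lt_trichotomy (sidonRank u) (sidonRank v) with h | h | h <;>
      first | simp [h, lt_asymm h, lt_irrefl] | simp [h, lt_irrefl]

/-- The edge-colouring of the Sidon construction, as a function on unordered pairs. -/
def sidonCol {n : ℕ} : Sym2 (SidonV n) → Fin 2 × ZMod n :=
  Sym2.lift ⟨fun u v => sidonColFun u v, sidonColFun_symm⟩


def IsSidon {G : Type*} [Add G] (A : Set G) : Prop :=
  ∀ a b a' b' : G, a ∈ A → b ∈ A → a' ∈ A → b' ∈ A →
    a + b = a' + b' → (a = a' ∧ b = b') ∨ (a = b' ∧ b = a')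

theorem IsSidon.eq_or_eq_of_add_eq_add {G : Type*} [Add G] {A : Set G} (hA : IsSidon A)
    {a b a' b' : G} (ha : a ∈ A) (hb : b ∈ A) (ha' : a' ∈ A) (hb' : b' ∈ A)
    (h : a + b = a' + b') : a = a' ∨ a = b' := by
  rcases hA a b a' b' ha hb ha' hb' h with ⟨h, -⟩ | ⟨h, -⟩
  exacts [Or.inl h, Or.inr h]

theorem IsSidon.not_nodup_of_signed_sum_eq_zero {G : Type*} [AddCommGroup G] {A : Set G}
    (hA : IsSidon A) {c₁ c₂ c₃ c₄ : G} (h₁ : c₁ ∈ A) (h₂ : c₂ ∈ A) (h₃ : c₃ ∈ A) (h₄ : c₄ ∈ A)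
    {ε₁ ε₂ ε₃ ε₄ : ℤ} (hε₁ : ε₁ = 1 ∨ ε₁ = -1) (hε₂ : ε₂ = 1 ∨ ε₂ = -1)
    (hε₃ : ε₃ = 1 ∨ ε₃ = -1) (hε₄ : ε₄ = 1 ∨ ε₄ = -1) (hε : ε₁ + ε₂ + ε₃ + ε₄ = 0)
    (hc : ε₁ • c₁ + ε₂ • c₂ + ε₃ • c₃ + ε₄ • c₄ = 0) :
    ¬ [c₁, c₂, c₃, c₄].Nodup := by
  have pair : ∀ {a b a' b' : G}, a ∈ A → b ∈ A → a' ∈ A → b' ∈ A →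
      a + b - (a' + b') = 0 → a = a' ∨ a = b' := fun ha hb ha' hb' h ↦
    hA.eq_or_eq_of_add_eq_add ha hb ha' hb' (sub_eq_zero.mp h)
  rcases hε₁ with rfl | rfl <;> rcases hε₂ with rfl | rfl <;> rcases hε₃ with rfl | rfl <;>
    rcases hε₄ with rfl | rfl <;> norm_num at hε <;> simp only [one_smul, neg_smul] at hc
  · rcases pair h₁ h₂ h₃ h₄ (by rw [← hc]; abel) with h | h <;> simp [h]
  · rcases pair h₁ h₃ h₂ h₄ (by rw [← hc]; abel) with h | h <;> simp [h]
  · rcases pair h₁ h₄ h₂ h₃ (by rw [← hc]; abel) with h | h <;> simp [h]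
  · rcases pair h₂ h₃ h₁ h₄ (by rw [← hc]; abel) with h | h <;> simp [h]
  · rcases pair h₂ h₄ h₁ h₃ (by rw [← hc]; abel) with h | h <;> simp [h]
  · rcases pair h₃ h₄ h₁ h₂ (by rw [← hc]; abel) with h | h <;> simp [h]

theorem SimpleGraph.Walk.exists_edges_eq_of_length_eq_four {V : Type*} {G : SimpleGraph V}
    {u v : V} (w : G.Walk u v) (h : w.length = 4) :
    ∃ v₁ v₂ v₃, G.Adj u v₁ ∧ G.Adj v₁ v₂ ∧ G.Adj v₂ v₃ ∧ G.Adj v₃ v ∧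
      w.edges = [s(u, v₁), s(v₁, v₂), s(v₂, v₃), s(v₃, v)] := by
  rcases w with _ | ⟨h₁, _ | ⟨h₂, _ | ⟨h₃, _ | ⟨h₄, _ | ⟨_, _⟩⟩⟩⟩⟩ <;>
    simp only [Walk.length_cons, Walk.length_nil] at h <;> try omega
  exact ⟨_, _, _, h₁, h₂, h₃, h₄, rfl⟩

section SidonGraph

variable {n : ℕ} {A1 A2 : Finset (ZMod n)} {u v x y : SidonV n}

theorem sidonRel.rank_eq (h : sidonRel A1 A2 u v) : sidonRank v = sidonRank u + 1 := by
  rcases h with ⟨hu, hv, -⟩ | ⟨hu, hv, -⟩ | ⟨hu, hv, -⟩ | ⟨hu, hv, -⟩ <;>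
    simp [sidonRank, hu, hv]

theorem sidonRel.colFun_snd (h : sidonRel A1 A2 u v) : (sidonColFun u v).2 = v.2 - u.2 := by
  simp [sidonColFun, h.rank_eq]

theorem sidonRel.colFun_mem (h : sidonRel A1 A2 u v) :
    ((sidonColFun u v).1 = 0 ∧ (sidonColFun u v).2 ∈ A1) ∨
      ((sidonColFun u v).1 = 1 ∧ (sidonColFun u v).2 ∈ A2) := by
  rw [h.colFun_snd]
  rcases h with ⟨hu, hv, hm⟩ | ⟨hu, hv, hm⟩ | ⟨hu, hv, hm⟩ | ⟨hu, hv, hm⟩ <;>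
    simp [sidonColFun, hu, hv, hm]

theorem sidonGraph_adj_colFun_mem (h : (sidonGraph A1 A2).Adj u v) :
    ((sidonColFun u v).1 = 0 ∧ (sidonColFun u v).2 ∈ A1) ∨
      ((sidonColFun u v).1 = 1 ∧ (sidonColFun u v).2 ∈ A2) := by
  rcases h with h | h
  · exact h.colFun_mem
  · rw [sidonColFun_symm]
    exact h.colFun_mem

theorem sidonGraph_adj_fst_eq_iff (h : (sidonGraph A1 A2).Adj u v) :
    u.1.1 = v.1.1 ↔ u.1.2 ≠ v.1.2 := by
  rcases h with h | h <;>
    rcases h with ⟨hu, hv, -⟩ | ⟨hu, hv, -⟩ | ⟨hu, hv, -⟩ | ⟨hu, hv, -⟩ <;>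
    simp [hu, hv]

theorem sidonGraph_adj_rank_sub (h : (sidonGraph A1 A2).Adj u v) :
    (sidonRank v : ℤ) - sidonRank u = 1 ∨ (sidonRank v : ℤ) - sidonRank u = -1 := by
  rcases h with h | h <;> rw [h.rank_eq] <;> push_cast <;> simp

theorem sidonGraph_adj_snd_sub (h : (sidonGraph A1 A2).Adj u v) :
    v.2 - u.2 = ((sidonRank v : ℤ) - sidonRank u) • (sidonColFun u v).2 := by
  rcases h with h | h
  · rw [h.colFun_snd, h.rank_eq]
    simp
  · rw [sidonColFun_symm, h.colFun_snd, h.rank_eq]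
    simp

theorem sidonGraph_fst_eq_of_colFun_fst_eq (hx : (sidonGraph A1 A2).Adj v x)
    (hy : (sidonGraph A1 A2).Adj v y) (h : (sidonColFun v x).1 = (sidonColFun v y).1) :
    x.1 = y.1 := by
  have square : ∀ p q r : Fin 2 × Fin 2, (p.1 = q.1 ↔ p.2 ≠ q.2) → (p.1 = r.1 ↔ p.2 ≠ r.2) →
      (p.1 = q.1 ↔ p.1 = r.1) → q = r := by
    decide
  refine square v.1 x.1 y.1 (sidonGraph_adj_fst_eq_iff hx) (sidonGraph_adj_fst_eq_iff hy) ?_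
  simp only [sidonColFun] at h
  split_ifs at h <;> simp_all

theorem sidonGraph_eq_of_colFun_eq (hx : (sidonGraph A1 A2).Adj v x)
    (hy : (sidonGraph A1 A2).Adj v y) (h : sidonColFun v x = sidonColFun v y) : x = y := by
  have hfst := sidonGraph_fst_eq_of_colFun_fst_eq hx hy (congrArg Prod.fst h)
  have hrank : sidonRank x = sidonRank y := by simp only [sidonRank, hfst]
  have hsnd : x.2 - v.2 = y.2 - v.2 := by
    rw [sidonGraph_adj_snd_sub hx, sidonGraph_adj_snd_sub hy, hrank, h]
  exact Prod.ext hfst (sub_left_inj.mp hsnd)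

theorem sidonCol_properColoring : ProperColoring (sidonGraph A1 A2) (sidonCol (n := n)) := by
  rintro e f he hf hne ⟨v, hve, hvf⟩ hcol
  obtain ⟨x, rfl⟩ := Sym2.mem_iff_exists.mp hve
  obtain ⟨y, rfl⟩ := Sym2.mem_iff_exists.mp hvf
  exact hne (congrArg _ (sidonGraph_eq_of_colFun_eq he hf hcol))

theorem sidonCol_eq_of_snd_eq (hdisj : Disjoint A1 A2) {e f : Sym2 (SidonV n)}
    (he : e ∈ (sidonGraph A1 A2).edgeSet) (hf : f ∈ (sidonGraph A1 A2).edgeSet)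
    (h : (sidonCol e).2 = (sidonCol f).2) : sidonCol e = sidonCol f := by
  induction e using Sym2.ind with | _ u v =>
  induction f using Sym2.ind with | _ x y =>
  simp only [sidonCol, Sym2.lift_mk] at h ⊢
  refine Prod.ext ?_ h
  rcases sidonGraph_adj_colFun_mem he with ⟨he₁, he₂⟩ | ⟨he₁, he₂⟩ <;>
    rcases sidonGraph_adj_colFun_mem hf with ⟨hf₁, hf₂⟩ | ⟨hf₁, hf₂⟩ <;>
    rw [he₁, hf₁]
  · exact (Finset.disjoint_left.mp hdisj he₂ (h ▸ hf₂)).elim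
  · exact (Finset.disjoint_left.mp hdisj hf₂ (h ▸ he₂)).elim

theorem sidonGraph_not_hasRainbowCycle_four {A : Finset (ZMod n)}
    (hA : IsSidon (A : Set (ZMod n))) (hpart : A1 ∪ A2 = A) (hdisj : Disjoint A1 A2) :
    ¬ HasRainbowCycle (sidonGraph A1 A2) (sidonCol (n := n)) 4 := by
  rintro ⟨u, w, -, hlen, hnd⟩
  have hsnd : (w.edges.map (Prod.snd ∘ sidonCol)).Nodup := by
    rw [← List.map_map]
    refine hnd.map_on ?_
    simp only [List.mem_map]
    rintro _ ⟨e, he, rfl⟩ _ ⟨f, hf, rfl⟩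
    exact sidonCol_eq_of_snd_eq hdisj (w.edges_subset_edgeSet he) (w.edges_subset_edgeSet hf)
  have hmem : ∀ {x y}, (sidonGraph A1 A2).Adj x y → (sidonColFun x y).2 ∈ (A : Set (ZMod n)) := by
    intro x y hxy
    rw [Finset.mem_coe, ← hpart, Finset.mem_union]
    rcases sidonGraph_adj_colFun_mem hxy with h | h
    exacts [Or.inl h.2, Or.inr h.2]
  obtain ⟨v₁, v₂, v₃, h₁, h₂, h₃, h₄, hw⟩ := w.exists_edges_eq_of_length_eq_four hlen
  simp only [hw, List.map_cons, List.map_nil, Function.comp_apply, sidonCol,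
    Sym2.lift_mk] at hsnd
  refine hA.not_nodup_of_signed_sum_eq_zero (hmem h₁) (hmem h₂) (hmem h₃) (hmem h₄)
    (sidonGraph_adj_rank_sub h₁) (sidonGraph_adj_rank_sub h₂) (sidonGraph_adj_rank_sub h₃)
    (sidonGraph_adj_rank_sub h₄) (by ring) ?_ hsnd
  rw [← sidonGraph_adj_snd_sub h₁, ← sidonGraph_adj_snd_sub h₂, ← sidonGraph_adj_snd_sub h₃,
    ← sidonGraph_adj_snd_sub h₄]
  abel

end SidonGraph

theorem sidon_construction_proper_and_no_rainbow_C4_general (n : ℕ)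
    (A A1 A2 : Finset (ZMod n))
    (hSidon : ∀ a b a' b' : ZMod n, a ∈ A → b ∈ A → a' ∈ A → b' ∈ A →
      a + b = a' + b' → (a = a' ∧ b = b') ∨ (a = b' ∧ b = a'))
    (hpart : A1 ∪ A2 = A) (hdisj : Disjoint A1 A2) :
    ProperColoring (sidonGraph A1 A2) (sidonCol (n := n)) ∧
      ¬ HasRainbowCycle (sidonGraph A1 A2) (sidonCol (n := n)) 4 :=
  ⟨sidonCol_properColoring, sidonGraph_not_hasRainbowCycle_four hSidon hpart hdisj⟩

/-- if `A` is a Sidon set in `ZMod n` partitioned into `A1` and `A2`,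
then the graph of the Sidon construction is properly edge-coloured and contains no
rainbow 4-cycle. -/
theorem sidon_construction_proper_and_no_rainbow_C4 (n : ℕ) (hn : 0 < n)
    (A A1 A2 : Finset (ZMod n))
    (hSidon : ∀ a b a' b' : ZMod n, a ∈ A → b ∈ A → a' ∈ A → b' ∈ A →
      a + b = a' + b' → (a = a' ∧ b = b') ∨ (a = b' ∧ b = a'))
    (hpart : A1 ∪ A2 = A) (hdisj : Disjoint A1 A2) :
    ProperColoring (sidonGraph A1 A2) (sidonCol (n := n)) ∧
      ¬ HasRainbowCycle (sidonGraph A1 A2) (sidonCol (n := n)) 4 :=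
  sidon_construction_proper_and_no_rainbow_C4_general n A A1 A2 hSidon hpart hdisj
end

section
/- In the 4-partite graph G of the Sidon-set construction (classes X_{00},X_{01},X_{10},X_{11} copies of Z_n, edge from x ∈ X_{00} to x+a_1 ∈ X_{10} for a_1 ∈ A_1, from x ∈ X_{00} to x+a_2 ∈ X_{01} for a_2 ∈ A_2, from x ∈ X_{10} to x+a_2 ∈ X_{11} for a_2 ∈ A_2, from x ∈ X_{01} to x+a_1 ∈ X_{11} for a_1 ∈ A_1), the number of 4-cycles with one vertex in each class is exactly n·|A_1|·|A_2|. -/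
/-- in the 4-partite Sidon-set construction (with `A = A1 ∪ A2` a Sidon
set and `A1`, `A2` disjoint), the number of 4-cycles `(x₀₀, x₁₀, x₁₁, x₀₁)` with one
vertex in each class — i.e. with `x₁₀ - x₀₀ ∈ A1`, `x₁₁ - x₁₀ ∈ A2`, `x₁₁ - x₀₁ ∈ A1`
and `x₀₁ - x₀₀ ∈ A2` — is exactly `n · |A1| · |A2|`. -/
theorem sidon_construction_four_cycle_count (n : ℕ) (hn : 0 < n)
    (A A1 A2 : Finset (ZMod n))
    (hSidon : ∀ a b a' b' : ZMod n, a ∈ A → b ∈ A → a' ∈ A → b' ∈ A →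
      a + b = a' + b' → (a = a' ∧ b = b') ∨ (a = b' ∧ b = a'))
    (hpart : A1 ∪ A2 = A) (hdisj : Disjoint A1 A2) :
    {q : ZMod n × ZMod n × ZMod n × ZMod n |
        q.2.1 - q.1 ∈ A1 ∧ q.2.2.1 - q.2.1 ∈ A2 ∧
        q.2.2.1 - q.2.2.2 ∈ A1 ∧ q.2.2.2 - q.1 ∈ A2}.ncard
      = n * A1.card * A2.card := by
  haveI : NeZero n := ⟨hn.ne'⟩
  have h1A : A1 ⊆ A := hpart ▸ Finset.subset_union_left
  have h2A : A2 ⊆ A := hpart ▸ Finset.subset_union_right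
  set f : ZMod n × ZMod n × ZMod n → ZMod n × ZMod n × ZMod n × ZMod n :=
    fun p => (p.1, p.1 + p.2.1, p.1 + p.2.1 + p.2.2, p.1 + p.2.2) with hf
  have hinj : Function.Injective f := by
    rintro ⟨x, a, b⟩ ⟨y, c, d⟩ h
    simp only [hf, Prod.mk.injEq] at h
    obtain ⟨h1, h2, h3, h4⟩ := h
    subst h1
    have ha : a = c := by exact add_left_cancel h2
    have hb : b = d := by exact add_left_cancel h4
    simp [ha, hb]
  have hset : {q : ZMod n × ZMod n × ZMod n × ZMod n |
        q.2.1 - q.1 ∈ A1 ∧ q.2.2.1 - q.2.1 ∈ A2 ∧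
        q.2.2.1 - q.2.2.2 ∈ A1 ∧ q.2.2.2 - q.1 ∈ A2}
      = f '' ↑((Finset.univ : Finset (ZMod n)) ×ˢ A1 ×ˢ A2) := by
    ext ⟨x00, x10, x11, x01⟩
    simp only [Set.mem_setOf_eq, Set.mem_image, Finset.coe_product, Finset.mem_coe,
      Finset.mem_product, Finset.mem_univ, true_and, Set.mem_prod, Set.mem_univ,
      Prod.exists, hf, Prod.mk.injEq]
    constructor
    · rintro ⟨h1, h2, h3, h4⟩
      have key : (x10 - x00) + (x11 - x10) = (x11 - x01) + (x01 - x00) := by ring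
      rcases hSidon _ _ _ _ (h1A h1) (h2A h2) (h1A h3) (h2A h4) key with ⟨e1, e2⟩ | ⟨e1, e2⟩
      · exact ⟨x00, x10 - x00, x01 - x00, ⟨h1, h4⟩, rfl, by ring,
          by linear_combination -e2, by ring⟩
      · exfalso
        exact Finset.disjoint_left.mp hdisj h1 (e1 ▸ h4)
    · rintro ⟨x, a, b, ⟨ha, hb⟩, rfl, rfl, rfl, rfl⟩
      have e1 : x + a - x = a := by ring
      have e2' : x + a + b - (x + a) = b := by ring
      have e3 : x + a + b - (x + b) = a := by ring
      have e4 : x + b - x = b := by ring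
      exact ⟨by rw [e1]; exact ha, by rw [e2']; exact hb,
        by rw [e3]; exact ha, by rw [e4]; exact hb⟩
  rw [hset, Set.ncard_image_of_injective _ hinj, Set.ncard_coe_finset]
  simp only [Finset.card_product, Finset.card_univ, ZMod.card]
  ring
end

section
/- Let k ≥ l ≥ 2 be integers and let G be a properly edge-coloured graph on n vertices with no rainbow cycle of length 2k+1 such that every edge of G is contained in a rainbow cycle of length 2l+1. Then there is a constant C = C(k) such that for every vertex a of G the number of paths of length 2 starting at a is at most C·n. -/
/-!
Suppose a vertex `a` starts more than `12k·n` paths `(a, x, y)`, and view them as the edges `x – y`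
of an auxiliary bipartite graph. Repeatedly deleting vertices of degree less than `6k` leaves a
nonempty part `F` of minimum degree at least `6k`. Pick `(x, z) ∈ F`: the edge `ax` lies on a
rainbow `C_{2l+1}`, which is `ax` followed by a rainbow path `P` from `x` to `a`. Prepending `y, z`
to `P`, where `(x, z), (y, z) ∈ F`, gives a path from a new neighbour `y` of `a`, two edges longer.
As the colouring is proper, every vertex or colour already on `P` excludes at most one choice of
`z` and of `y`, so the minimum degree leaves room to keep the path rainbow together with its
closing edge `ya`. After `k - l` such steps, closing with `ya` gives a rainbow `C_{2k+1}`.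
-/

open SimpleGraph

open Finset

namespace Finset

variable {α β δ : Type*} [DecidableEq β] [DecidableEq δ]

lemma exists_mem_notMem_of_injOn [DecidableEq α] {A B : Finset α} {T : Finset β} {f g : α → β}
    (hf : Set.InjOn f A) (hg : Set.InjOn g A) (h : #B + 2 * #T < #A) :
    ∃ x ∈ A, x ∉ B ∧ f x ∉ T ∧ g x ∉ T := by
  have hfT : #{x ∈ A | f x ∈ T} ≤ #T :=
    card_le_card_of_injOn f (fun x hx => (mem_filter.1 hx).2) (hf.mono (filter_subset _ _))
  have hgT : #{x ∈ A | g x ∈ T} ≤ #T :=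
    card_le_card_of_injOn g (fun x hx => (mem_filter.1 hx).2) (hg.mono (filter_subset _ _))
  by_contra! hall
  have hcover : A ⊆ B ∪ {x ∈ A | f x ∈ T} ∪ {x ∈ A | g x ∈ T} := by
    intro x hx
    by_cases hxB : x ∈ B
    · simp [hxB]
    by_cases hfx : f x ∈ T
    · simp [hx, hfx]
    · simp [hx, hall x hx hxB hfx]
  have := (card_le_card hcover).trans
    ((card_union_le _ _).trans (Nat.add_le_add_right (card_union_le _ _) _))
  omega

lemma card_image_snd_filter_fst_s9 [DecidableEq α] (F : Finset (α × β)) (x : α) :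
    #({q ∈ F | q.1 = x}.image Prod.snd) = #{q ∈ F | q.1 = x} :=
  card_image_of_injOn fun _ hq _ hq' h =>
    Prod.ext ((mem_filter.1 hq).2.trans (mem_filter.1 hq').2.symm) h

lemma card_image_fst_filter_snd_s9 [DecidableEq α] (F : Finset (α × β)) (y : β) :
    #({q ∈ F | q.2 = y}.image Prod.fst) = #{q ∈ F | q.2 = y} :=
  card_image_of_injOn fun _ hq _ hq' h =>
    Prod.ext h ((mem_filter.1 hq).2.trans (mem_filter.1 hq').2.symm)

lemma card_image_filter_ne_add_one (f : α → β) {s : Finset α} {a : α} (ha : a ∈ s) :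
    #({x ∈ s | f x ≠ f a}.image f) + 1 = #(s.image f) := by
  rw [← filter_image (p := (· ≠ f a)), filter_ne', card_erase_add_one (mem_image_of_mem f ha)]

lemma lt_card_filter_ne_of_card_fiber_lt (f : α → β) {s : Finset α} {a : α} (ha : a ∈ s)
    {D m m' : ℕ} (hm : m' ≤ m) (hthin : #{x ∈ s | f x = f a} < D)
    (hdense : D * (#(s.image f) + m) < #s) :
    D * (#({x ∈ s | f x ≠ f a}.image f) + m') < #{x ∈ s | f x ≠ f a} := by
  have himage := card_image_filter_ne_add_one f ha
  have hsplit := card_filter_add_card_filter_not (s := s) (fun x => f x = f a)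
  have hmono := Nat.mul_le_mul_left D
    (Nat.add_le_add_left hm #({x ∈ s | f x ≠ f a}.image f))
  rw [← himage] at hdense
  nlinarith

lemma exists_subset_le_card_fiber (f : α → β) (g : α → δ) (D : ℕ) (s : Finset α)
    (h : D * (#(s.image f) + #(s.image g)) < #s) :
    ∃ t ⊆ s, t.Nonempty ∧ ∀ a ∈ t, D ≤ #{x ∈ t | f x = f a} ∧ D ≤ #{x ∈ t | g x = g a} := by
  induction s using strongInduction with
  | H s ih =>
  by_cases! hthin : ∃ a ∈ s, #{x ∈ s | f x = f a} < D ∨ #{x ∈ s | g x = g a} < D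
  · obtain ⟨a, ha, hfa | hga⟩ := hthin
    · obtain ⟨t, hts, ht⟩ := ih {x ∈ s | f x ≠ f a} (filter_ssubset.2 ⟨a, ha, by simp⟩)
        (lt_card_filter_ne_of_card_fiber_lt f ha
          (card_le_card (image_subset_image (filter_subset _ _))) hfa h)
      exact ⟨t, hts.trans (filter_subset _ _), ht⟩
    · rw [add_comm] at h
      have hdense := lt_card_filter_ne_of_card_fiber_lt g ha
        (card_le_card (image_subset_image (filter_subset (g · ≠ g a) s))) hga h
      rw [add_comm] at hdense
      obtain ⟨t, hts, ht⟩ := ih {x ∈ s | g x ≠ g a} (filter_ssubset.2 ⟨a, ha, by simp⟩) hdense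
      exact ⟨t, hts.trans (filter_subset _ _), ht⟩
  · exact ⟨s, subset_rfl, card_pos.1 (by omega), hthin⟩

end Finset

namespace SimpleGraph.Walk

variable {V : Type*} {G : SimpleGraph V}

lemma IsCycle.edges_eq_cons_tail {a : V} {p : G.Walk a a} (hp : p.IsCycle) :
    p.edges = s(a, p.snd) :: p.tail.edges := by
  conv_lhs => rw [← p.cons_tail_eq hp.not_nil]
  rw [edges_cons]

lemma IsCycle.exists_isPath_cons_perm_edges [DecidableEq V] {u a x : V} {w : G.Walk u u}
    (hw : w.IsCycle) (he : s(a, x) ∈ w.edges) :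
    ∃ P : G.Walk x a, P.IsPath ∧ (s(a, x) :: P.edges).Perm w.edges := by
  have ha := w.fst_mem_support_of_mem_edges he
  have hr : (w.rotate a ha).IsCycle := hw.rotate ha
  have hrw : (w.rotate a ha).edges.Perm w.edges := (w.rotate_edges a ha).perm
  obtain ⟨r, hr, hsnd, hperm⟩ :
      ∃ r : G.Walk a a, r.IsCycle ∧ r.snd = x ∧ r.edges.Perm w.edges := by
    have hx : x ∈ (w.rotate a ha).toSubgraph.neighborSet a := by
      rw [Subgraph.mem_neighborSet, adj_toSubgraph_iff_mem_edges, hrw.mem_iff]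
      exact he
    rcases hr.neighborSet_toSubgraph_endpoint ▸ hx with hx | hx
    · exact ⟨_, hr, hx.symm, hrw⟩
    · refine ⟨_, hr.reverse, (snd_reverse _).trans hx.symm, ?_⟩
      rw [edges_reverse]
      exact (List.reverse_perm _).trans hrw
  subst hsnd
  exact ⟨r.tail, hr.isPath_tail, hr.edges_eq_cons_tail ▸ hperm⟩

end SimpleGraph.Walk

open SimpleGraph.Walk

section

variable {V γ : Type*} {G : SimpleGraph V} {c : Sym2 V → γ}

lemma ProperColoring.apply_ne (hc : ProperColoring G c) {u v w : V} (huv : G.Adj u v)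
    (huw : G.Adj u w) (hvw : v ≠ w) : c s(u, v) ≠ c s(u, w) :=
  hc _ _ huv huw (Sym2.congr_right.not.2 hvw) ⟨u, Sym2.mem_mk_left _ _, Sym2.mem_mk_left _ _⟩

lemma ProperColoring.injOn_neighborSet (hc : ProperColoring G c) (u : V) :
    Set.InjOn (fun v => c s(u, v)) (G.neighborSet u) :=
  fun _ hv _ hw h => by_contra fun hvw => hc.apply_ne hv hw hvw h

lemma hasRainbowCycle_cons {a y : V} (h : G.Adj a y) {P : G.Walk y a} (hP : P.IsPath)
    (hPc : (c s(a, y) :: P.edges.map c).Nodup) : HasRainbowCycle G c (P.length + 1) :=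
  ⟨a, cons h P, (cons_isCycle_iff P h).2 ⟨hP, fun he => (List.nodup_cons.1 hPc).1
    (List.mem_map_of_mem he)⟩, length_cons _ _, hPc⟩

end

section Extension

variable {V γ : Type*} [DecidableEq V] [DecidableEq γ] {G : SimpleGraph V} {c : Sym2 V → γ}
  {a : V} {F : Finset (V × V)} {D : ℕ}

lemma exists_isPath_length_add_two (hc : ProperColoring G c)
    (hF : ∀ p ∈ F, G.Adj a p.1 ∧ G.Adj p.1 p.2 ∧ p.2 ≠ a)
    (hD : ∀ p ∈ F, D ≤ #{q ∈ F | q.1 = p.1} ∧ D ≤ #{q ∈ F | q.2 = p.2})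
    {x : V} (hx : ∃ z, (x, z) ∈ F) (P : G.Walk x a) (hP : P.IsPath)
    (hPc : (c s(a, x) :: P.edges.map c).Nodup) (hlen : 3 * (P.length + 2) ≤ D) :
    ∃ y, (∃ z, (y, z) ∈ F) ∧ ∃ P' : G.Walk y a, P'.IsPath ∧ P'.length = P.length + 2 ∧
      (c s(a, y) :: P'.edges.map c).Nodup := by
  obtain ⟨z₀, hxz₀⟩ := hx
  have hsupp : #P.support.toFinset ≤ P.length + 1 := P.length_support ▸ P.support.toFinset_card_le
  have hcol : #(P.edges.map c).toFinset ≤ P.length := by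
    simpa using (P.edges.map c).toFinset_card_le
  set Z := {q ∈ F | q.1 = x}.image Prod.snd
  have hZinj : Set.InjOn (fun z => c s(x, z)) Z :=
    (hc.injOn_neighborSet x).mono fun z hz => (hF (x, z) (by simpa [Z] using hz)).2.1
  obtain ⟨z, hzZ, hzP, hzc, -⟩ := exists_mem_notMem_of_injOn (B := P.support.toFinset)
    (T := (P.edges.map c).toFinset) hZinj hZinj
    (by have : D ≤ #Z := card_image_snd_filter_fst_s9 F x ▸ (hD _ hxz₀).1; omega)
  have hxz : (x, z) ∈ F := by simpa [Z] using hzZ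
  set Y := {q ∈ F | q.2 = z}.image Prod.fst
  have hYinj : Set.InjOn (fun y => c s(z, y)) Y :=
    (hc.injOn_neighborSet z).mono fun y hy => (hF (y, z) (by simpa [Y] using hy)).2.1.symm
  have hYinj' : Set.InjOn (fun y => c s(a, y)) Y :=
    (hc.injOn_neighborSet a).mono fun y hy => (hF (y, z) (by simpa [Y] using hy)).1
  obtain ⟨y, hyY, hyP, hyc, hayc⟩ := exists_mem_notMem_of_injOn (B := P.support.toFinset)
    (T := insert (c s(z, x)) (P.edges.map c).toFinset) hYinj hYinj'
    (by have : D ≤ #Y := card_image_fst_filter_snd_s9 F z ▸ (hD _ hxz).2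
        have := card_insert_le (c s(z, x)) (P.edges.map c).toFinset
        omega)
  have hyz : (y, z) ∈ F := by simpa [Y] using hyY
  obtain ⟨hay, hyz', hza⟩ := hF _ hyz
  have hzx := (hF _ hxz).2.1.symm
  refine ⟨y, ⟨z, hyz⟩, cons hyz' (cons hzx P), ?_, by simp, ?_⟩
  · rw [List.mem_toFinset] at hzP hyP
    simp [cons_isPath_iff, hP, hzP, hyP, hyz'.ne]
  · have hayz : c s(a, y) ≠ c s(y, z) := by
      rw [Sym2.eq_swap]
      exact hc.apply_ne hay.symm hyz' (Ne.symm hza)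
    rw [Sym2.eq_swap (a := z) (b := y)] at hyc
    rw [Sym2.eq_swap (a := x)] at hzc
    simp only [mem_insert, List.mem_toFinset, not_or] at hyc hayc hzc
    simp only [edges_cons, List.map_cons, List.nodup_cons, List.mem_cons, not_or]
    exact ⟨⟨hayz, hayc⟩, hyc, hzc, (List.nodup_cons.1 hPc).2⟩

lemma exists_isPath_length_add_two_mul (hc : ProperColoring G c)
    (hF : ∀ p ∈ F, G.Adj a p.1 ∧ G.Adj p.1 p.2 ∧ p.2 ≠ a)
    (hD : ∀ p ∈ F, D ≤ #{q ∈ F | q.1 = p.1} ∧ D ≤ #{q ∈ F | q.2 = p.2}) (s : ℕ)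
    {x : V} (hx : ∃ z, (x, z) ∈ F) (P : G.Walk x a) (hP : P.IsPath)
    (hPc : (c s(a, x) :: P.edges.map c).Nodup) (hlen : 3 * (P.length + 2 * s) ≤ D) :
    ∃ y, (∃ z, (y, z) ∈ F) ∧ ∃ P' : G.Walk y a, P'.IsPath ∧ P'.length = P.length + 2 * s ∧
      (c s(a, y) :: P'.edges.map c).Nodup := by
  induction s generalizing x with
  | zero => exact ⟨x, hx, P, hP, rfl, hPc⟩
  | succ s ih =>
    obtain ⟨y, hy, P₁, hP₁, hP₁len, hP₁c⟩ :=
      exists_isPath_length_add_two hc hF hD hx P hP hPc (by omega)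
    obtain ⟨y', hy', P', hP', hP'len, hP'c⟩ := ih hy P₁ hP₁ hP₁c (by omega)
    exact ⟨y', hy', P', hP', by omega, hP'c⟩

end Extension

theorem paths_of_length_two_no_rainbow_odd_cycle_general (k l : ℕ) (hlk : l ≤ k) :
    ∃ C : ℕ, ∀ (V : Type) [Fintype V] (G : SimpleGraph V) (γ : Type) (c : Sym2 V → γ),
      ProperColoring G c → ¬ HasRainbowCycle G c (2 * k + 1) →
      (∀ e ∈ G.edgeSet, ∃ (u : V) (w : G.Walk u u), w.IsCycle ∧ w.length = 2 * l + 1 ∧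
        (w.edges.map c).Nodup ∧ e ∈ w.edges) →
      ∀ a : V,
        {p : V × V | G.Adj a p.1 ∧ G.Adj p.1 p.2 ∧ p.2 ≠ a}.ncard ≤ C * Fintype.card V := by
  classical
  refine ⟨12 * k, fun V _ G γ c hc hno hcyc a => ?_⟩
  let F : Finset (V × V) := {p | G.Adj a p.1 ∧ G.Adj p.1 p.2 ∧ p.2 ≠ a}
  rw [← coe_filter_univ, Set.ncard_coe_finset]
  change #F ≤ _
  by_contra! hbig
  have hdense : 6 * k * (#(F.image Prod.fst) + #(F.image Prod.snd)) < #F :=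
    calc 6 * k * (#(F.image Prod.fst) + #(F.image Prod.snd))
        ≤ 6 * k * (Fintype.card V + Fintype.card V) := by gcongr <;> exact card_le_univ _
      _ = 12 * k * Fintype.card V := by ring
      _ < #F := hbig
  obtain ⟨F', hF'F, ⟨⟨x, z⟩, hxz⟩, hD⟩ := exists_subset_le_card_fiber Prod.fst Prod.snd _ F hdense
  have hF' : ∀ p ∈ F', G.Adj a p.1 ∧ G.Adj p.1 p.2 ∧ p.2 ≠ a := fun p hp => by
    simpa [F] using hF'F hp
  obtain ⟨_, w, hw, hwlen, hwc, haxw⟩ := hcyc _ (G.mem_edgeSet.2 (hF' _ hxz).1)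
  obtain ⟨P, hP, hperm⟩ := hw.exists_isPath_cons_perm_edges haxw
  have hPlen : P.length = 2 * l := by
    have := hperm.length_eq
    simp only [List.length_cons, length_edges] at this
    omega
  obtain ⟨y, ⟨z', hyz'⟩, P', hP', hP'len, hP'c⟩ := exists_isPath_length_add_two_mul hc hF' hD
    (k - l) ⟨z, hxz⟩ P hP ((hperm.map c).nodup_iff.2 hwc) (by omega)
  have hlen : P'.length + 1 = 2 * k + 1 := by omega
  exact hno (hlen ▸ hasRainbowCycle_cons (hF' _ hyz').1 hP' hP'c)

/-- let `k ≥ l ≥ 2`, and let `G` be properly edge-coloured with no rainbow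
`C_{2k+1}` such that every edge lies in a rainbow `C_{2l+1}`. Then every vertex starts
at most `C·n` paths of length 2, for a constant `C = C(k)`. -/
theorem paths_of_length_two_no_rainbow_odd_cycle (k l : ℕ) (hl : 2 ≤ l) (hlk : l ≤ k) :
    ∃ C : ℕ, ∀ (V : Type) [Fintype V] (G : SimpleGraph V) (γ : Type) (c : Sym2 V → γ),
      ProperColoring G c → ¬ HasRainbowCycle G c (2 * k + 1) →
      (∀ e ∈ G.edgeSet, ∃ (u : V) (w : G.Walk u u), w.IsCycle ∧ w.length = 2 * l + 1 ∧
        (w.edges.map c).Nodup ∧ e ∈ w.edges) →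
      ∀ a : V,
        {p : V × V | G.Adj a p.1 ∧ G.Adj p.1 p.2 ∧ p.2 ≠ a}.ncard ≤ C * Fintype.card V :=
  paths_of_length_two_no_rainbow_odd_cycle_general k l hlk
end

section
/- Let l ≥ 2 and consider the (2l+1)-partite graph G with vertex classes X_1,…,X_{2l+1}, each a copy of {1,…,n}, where for each i ≠ 1,3 every vertex of X_i is joined to every vertex of X_{i+1} (indices mod 2l+1), each x ∈ X_1 is joined only to its copy x ∈ X_2, and each x ∈ X_3 is joined only to its copy x ∈ X_4. Give colour 1 to all edges between X_1,X_2 and between X_3,X_4, and distinct new colours to all other edges. Then this colouring is a proper edge-colouring, G has (2l+1)n vertices, G contains at least n^{2l−1} cycles of length 2l+1, and no cycle of G that uses an edge between every consecutive pair of classes is rainbow. -/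
open SimpleGraph

/-- The oriented edge relation of the `(2l+1)`-partite construction: class `i` is joined
to class `i+1` (mod `2l+1`), completely except that between classes `0,1` (i.e. `X₁,X₂`)
and between classes `2,3` (i.e. `X₃,X₄`) only the perfect matching `x ↦ x` is present. -/
def oddConsRel (l n : ℕ) (u v : Fin (2 * l + 1) × Fin n) : Prop :=
  v.1 = u.1 + 1 ∧ ((u.1 = 0 ∨ u.1 = 2) → u.2 = v.2)

/-- The `(2l+1)`-partite graph of the construction. -/
def oddConsGraph (l n : ℕ) : SimpleGraph (Fin (2 * l + 1) × Fin n) where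
  Adj u v := u ≠ v ∧ (oddConsRel l n u v ∨ oddConsRel l n v u)
  symm := by constructor; intro u v h; exact ⟨h.1.symm, h.2.symm⟩
  loopless := by constructor; intro u h; exact h.1 rfl

/-- A pair is a matching edge (colour 1 in the paper) iff it joins classes `0,1` or
classes `2,3` and has equal second coordinates. -/
def IsMatchEdge (l n : ℕ) (e : Sym2 (Fin (2 * l + 1) × Fin n)) : Prop :=
  ∃ u v : Fin (2 * l + 1) × Fin n, e = s(u, v) ∧ v.1 = u.1 + 1 ∧
    (u.1 = 0 ∨ u.1 = 2) ∧ u.2 = v.2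

open Classical in
/-- The colouring: all matching edges get one common colour (`none`), and every other
pair gets its own colour (`some` of itself), i.e. pairwise distinct fresh colours. -/
noncomputable def oddConsCol (l n : ℕ) :
    Sym2 (Fin (2 * l + 1) × Fin n) → Option (Sym2 (Fin (2 * l + 1) × Fin n)) :=
  fun e => if IsMatchEdge l n e then none else some e

/-! The only edges sharing a colour are the matching edges, and the matchings between
`X₁,X₂` and between `X₃,X₄` are vertex-disjoint once `l ≥ 2`; so the colouring is proper,
while a cycle crossing every pair of consecutive classes uses one edge of each matching.
Cycles are counted through transversals `i ↦ (i, g i)`: the matchings only force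
`g 0 = g 1` and `g 2 = g 3`, leaving `2l - 1` free labels. -/

section ClassArithmetic

variable {l : ℕ}

lemma val_one_of_one_le (hl : 1 ≤ l) : ((1 : Fin (2 * l + 1)) : ℕ) = 1 := by
  simpa using Nat.mod_eq_of_lt (by omega : 1 < 2 * l + 1)

lemma val_two_of_one_le (hl : 1 ≤ l) : ((2 : Fin (2 * l + 1)) : ℕ) = 2 := by
  simpa using Nat.mod_eq_of_lt (by omega : 2 < 2 * l + 1)

lemma val_eq_zero_or_two {i : Fin (2 * l + 1)} (hl : 1 ≤ l) (hi : i = 0 ∨ i = 2) :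
    (i : ℕ) = 0 ∨ (i : ℕ) = 2 := by
  rcases hi with rfl | rfl
  · exact Or.inl rfl
  · exact Or.inr (val_two_of_one_le hl)

lemma add_one_ne_of_eq_zero_or_two {i j : Fin (2 * l + 1)} (hl : 2 ≤ l)
    (hi : i = 0 ∨ i = 2) (hj : j = 0 ∨ j = 2) : i + 1 ≠ j := by
  have hi' := val_eq_zero_or_two (by omega) hi
  have hj' := val_eq_zero_or_two (by omega) hj
  intro h
  have := congrArg Fin.val h
  rw [Fin.val_add_one_of_lt' (by omega)] at this
  omega

end ClassArithmetic

section Coloring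

variable {l n : ℕ}

lemma eq_of_mem_matchEdge (hl : 2 ≤ l) {u u' x : Fin (2 * l + 1) × Fin n}
    (hu : u.1 = 0 ∨ u.1 = 2) (hu' : u'.1 = 0 ∨ u'.1 = 2)
    (hx : x ∈ s(u, (u.1 + 1, u.2))) (hx' : x ∈ s(u', (u'.1 + 1, u'.2))) : u = u' := by
  rw [Sym2.mem_iff] at hx hx'
  rcases hx with rfl | rfl <;> rcases hx' with h | h
  · exact h
  · exact absurd (congrArg Prod.fst h).symm (add_one_ne_of_eq_zero_or_two hl hu' hu)
  · exact absurd (congrArg Prod.fst h) (add_one_ne_of_eq_zero_or_two hl hu hu')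
  · obtain ⟨h1, h2⟩ := Prod.mk.inj h
    exact Prod.ext (add_right_cancel h1) h2

lemma isMatchEdge_iff {e : Sym2 (Fin (2 * l + 1) × Fin n)} :
    IsMatchEdge l n e ↔ ∃ u : Fin (2 * l + 1) × Fin n,
      (u.1 = 0 ∨ u.1 = 2) ∧ e = s(u, (u.1 + 1, u.2)) := by
  constructor
  · rintro ⟨u, v, rfl, hv, hu, huv⟩
    exact ⟨u, hu, by rw [← hv, huv]⟩
  · rintro ⟨u, hu, rfl⟩
    exact ⟨u, _, rfl, rfl, hu, rfl⟩

lemma IsMatchEdge.eq_of_mem (hl : 2 ≤ l) {e f : Sym2 (Fin (2 * l + 1) × Fin n)}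
    (he : IsMatchEdge l n e) (hf : IsMatchEdge l n f) {x : Fin (2 * l + 1) × Fin n}
    (hxe : x ∈ e) (hxf : x ∈ f) : e = f := by
  obtain ⟨u, hu, rfl⟩ := isMatchEdge_iff.1 he
  obtain ⟨u', hu', rfl⟩ := isMatchEdge_iff.1 hf
  rw [eq_of_mem_matchEdge hl hu hu' hxe hxf]

lemma oddConsCol_eq_iff {e f : Sym2 (Fin (2 * l + 1) × Fin n)} :
    oddConsCol l n e = oddConsCol l n f ↔ e = f ∨ IsMatchEdge l n e ∧ IsMatchEdge l n f := by
  unfold oddConsCol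
  by_cases he : IsMatchEdge l n e <;> by_cases hf : IsMatchEdge l n f <;> simp [he, hf]
  · rintro rfl; exact hf he
  · rintro rfl; exact he hf

theorem properColoring_oddConsCol (hl : 2 ≤ l) :
    ProperColoring (oddConsGraph l n) (oddConsCol l n) := by
  rintro e f - - hne ⟨x, hxe, hxf⟩ hcol
  rcases oddConsCol_eq_iff.1 hcol with heq | ⟨he, hf⟩
  · exact hne heq
  · exact hne (he.eq_of_mem hl hf hxe hxf)

lemma eq_of_adj_of_fst_eq_zero_or_two (hl : 2 ≤ l) {a b : Fin (2 * l + 1) × Fin n}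
    (hab : (oddConsGraph l n).Adj a b) (ha : a.1 = 0 ∨ a.1 = 2) (hb : b.1 = a.1 + 1) :
    b = (a.1 + 1, a.2) := by
  rcases hab.2 with hrel | hrel
  · exact Prod.ext hb (hrel.2 ha).symm
  · have ha' := val_eq_zero_or_two (by omega) ha
    have hbv : (b.1 : ℕ) = a.1 + 1 := by rw [hb, Fin.val_add_one_of_lt' (by omega)]
    have hav := congrArg Fin.val hrel.1
    rw [Fin.val_add_one_of_lt' (by omega), hbv] at hav
    omega

theorem not_nodup_map_oddConsCol (hl : 2 ≤ l) {es : List (Sym2 (Fin (2 * l + 1) × Fin n))}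
    (hes : ∀ e ∈ es, e ∈ (oddConsGraph l n).edgeSet)
    (h₀ : ∃ e ∈ es, ∃ a b : Fin (2 * l + 1) × Fin n, e = s(a, b) ∧ a.1 = 0 ∧ b.1 = 0 + 1)
    (h₂ : ∃ e ∈ es, ∃ a b : Fin (2 * l + 1) × Fin n, e = s(a, b) ∧ a.1 = 2 ∧ b.1 = 2 + 1) :
    ¬ (es.map (oddConsCol l n)).Nodup := by
  intro hnodup
  obtain ⟨_, he, a, b, rfl, ha, hb⟩ := h₀
  obtain ⟨_, hf, a', b', rfl, ha', hb'⟩ := h₂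
  have hab : (oddConsGraph l n).Adj a b := hes _ he
  have hab' : (oddConsGraph l n).Adj a' b' := hes _ hf
  obtain rfl := eq_of_adj_of_fst_eq_zero_or_two hl hab (Or.inl ha) (by rw [ha, hb])
  obtain rfl := eq_of_adj_of_fst_eq_zero_or_two hl hab' (Or.inr ha') (by rw [ha', hb'])
  have hmatch : IsMatchEdge l n s(a, (a.1 + 1, a.2)) ∧ IsMatchEdge l n s(a', (a'.1 + 1, a'.2)) :=
    ⟨isMatchEdge_iff.2 ⟨a, Or.inl ha, rfl⟩, isMatchEdge_iff.2 ⟨a', Or.inr ha', rfl⟩⟩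
  have heq := List.inj_on_of_nodup_map hnodup he hf (oddConsCol_eq_iff.2 (Or.inr hmatch))
  have haa' : a = a' :=
    eq_of_mem_matchEdge hl (Or.inl ha) (Or.inr ha') (Sym2.mem_mk_left _ _)
      (heq ▸ Sym2.mem_mk_left _ _)
  have h02 := congrArg Fin.val (ha.symm.trans (haa' ▸ ha'))
  rw [val_two_of_one_le (by omega)] at h02
  simp at h02

end Coloring

section Counting

variable {l n : ℕ}

def collapseClass (hl : 2 ≤ l) (i : Fin (2 * l + 1)) : Fin (2 * l - 1) :=
  ⟨if (i : ℕ) ≤ 1 then 0 else if (i : ℕ) ≤ 3 then 1 else i - 2, by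
    have := i.isLt
    split_ifs <;> omega⟩

lemma collapseClass_surjective (hl : 2 ≤ l) : Function.Surjective (collapseClass hl) := by
  intro j
  have := j.isLt
  refine ⟨⟨if (j : ℕ) = 0 then 0 else if (j : ℕ) = 1 then 2 else j + 2, by split_ifs <;> omega⟩,
    Fin.ext ?_⟩
  simp only [collapseClass]
  split_ifs <;> omega

lemma collapseClass_add_one (hl : 2 ≤ l) {i : Fin (2 * l + 1)} (hi : i = 0 ∨ i = 2) :
    collapseClass hl (i + 1) = collapseClass hl i := by
  have hi' := val_eq_zero_or_two (by omega) hi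
  apply Fin.ext
  simp only [collapseClass, Fin.val_add_one_of_lt' (show (i : ℕ) + 1 < 2 * l + 1 by omega)]
  split_ifs <;> omega

lemma injective_adj_transversal (hl : 1 ≤ l) {g : Fin (2 * l + 1) → Fin n}
    (hg : ∀ i, (i = 0 ∨ i = 2) → g i = g (i + 1)) :
    Function.Injective (fun i => (i, g i)) ∧
      ∀ i, (oddConsGraph l n).Adj (i, g i) (i + 1, g (i + 1)) := by
  refine ⟨fun i j h => congrArg Prod.fst h, fun i => ⟨fun h => ?_, Or.inl ⟨rfl, hg i⟩⟩⟩
  have h1 := congrArg Fin.val (left_eq_add.1 (congrArg Prod.fst h))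
  rw [val_one_of_one_le hl] at h1
  exact absurd h1 one_ne_zero

theorem pow_le_ncard_oddCycles (hl : 2 ≤ l) :
    n ^ (2 * l - 1) ≤
      {x : Fin (2 * l + 1) → Fin (2 * l + 1) × Fin n | Function.Injective x ∧
        ∀ i, (oddConsGraph l n).Adj (x i) (x (i + 1))}.ncard := by
  set S := {x : Fin (2 * l + 1) → Fin (2 * l + 1) × Fin n | Function.Injective x ∧
    ∀ i, (oddConsGraph l n).Adj (x i) (x (i + 1))}
  let lift : (Fin (2 * l - 1) → Fin n) → S := fun f =>
    ⟨fun i => (i, f (collapseClass hl i)), injective_adj_transversal (by omega)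
      fun i hi => by rw [collapseClass_add_one hl hi]⟩
  have hlift : Function.Injective lift := fun f f' h =>
    (collapseClass_surjective hl).injective_comp_right <|
      funext fun i => congrArg (fun x : S => (x.1 i).2) h
  calc n ^ (2 * l - 1) = Nat.card (Fin (2 * l - 1) → Fin n) := by simp
    _ ≤ Nat.card S := Nat.card_le_card_of_injective lift hlift
    _ = S.ncard := Nat.card_coe_set_eq S

end Counting

/-- the `(2l+1)`-partite construction is properly edge-coloured, has
`(2l+1)·n` vertices, contains at least `n^{2l-1}` cycles of length `2l+1` (counted here
as injective cyclic vertex sequences), and no cycle of it using an edge between every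
consecutive pair of classes is rainbow. -/
theorem odd_cycle_construction (l n : ℕ) (hl : 2 ≤ l) :
    ProperColoring (oddConsGraph l n) (oddConsCol l n) ∧
    Fintype.card (Fin (2 * l + 1) × Fin n) = (2 * l + 1) * n ∧
    n ^ (2 * l - 1) ≤
      {x : Fin (2 * l + 1) → Fin (2 * l + 1) × Fin n | Function.Injective x ∧
        ∀ i, (oddConsGraph l n).Adj (x i) (x (i + 1))}.ncard ∧
    ∀ (u : Fin (2 * l + 1) × Fin n) (w : (oddConsGraph l n).Walk u u), w.IsCycle →
      (∀ i : Fin (2 * l + 1), ∃ e ∈ w.edges, ∃ a b : Fin (2 * l + 1) × Fin n,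
        e = s(a, b) ∧ a.1 = i ∧ b.1 = i + 1) →
      ¬ (w.edges.map (oddConsCol l n)).Nodup := by
  refine ⟨properColoring_oddConsCol hl, by simp, pow_le_ncard_oddCycles hl, ?_⟩
  intro u w _ hcross
  exact not_nodup_map_oddConsCol hl (fun _ he => w.edges_subset_edgeSet he) (hcross 0) (hcross 2)
end

section
/- Let k ≥ 2 and let G be a properly edge-coloured graph on n vertices with no rainbow C_{2k}. Then there is a constant C = C(k) such that the number of paths (x,y,z) in G for which x and z have at least 100k common neighbours is at most C·|E(G)|. -/
open SimpleGraph

/-!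
Fix the middle vertex `y`. If two neighbours `x, z` of `y` have many common neighbours, we can
route a path from `x` to `z` through one of them while avoiding any few forbidden vertices and
colours. Hence a path `x₁ … x_k` in the auxiliary graph on `N(y)` (edges: pairs with at least
`100k` common neighbours) can be subdivided greedily into a rainbow path `x₁ w₁ x₂ … x_k` of `G`
avoiding `y` and the colours at `y`; closing it up through `y` gives a rainbow `C_{2k}`. So the
auxiliary graph has no path with `k - 1` edges, hence, by repeatedly deleting a vertex of degree
`< k - 1`, at most `(k - 1)·deg(y)` edges. Summing over `y` bounds the number of such paths
`(x, y, z)` by `4(k - 1)·|E(G)|`.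
-/

open Finset

namespace SimpleGraph

section LongPaths

variable {V : Type*} [Fintype V] [DecidableEq V] {H : SimpleGraph V} [DecidableRel H.Adj]
  {s : Finset V} {m : ℕ}

lemma exists_isPath_length_eq_of_le_degree (hs : H.support ⊆ s)
    (hdeg : ∀ v ∈ s, m ≤ H.degree v) {v : V} (hv : v ∈ s) :
    ∃ (u : V) (p : H.Walk u v), p.IsPath ∧ p.length = m := by
  suffices ∀ j ≤ m, ∃ u ∈ s, ∃ p : H.Walk u v, p.IsPath ∧ p.length = j by
    obtain ⟨u, -, p, hp⟩ := this m le_rfl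
    exact ⟨u, p, hp⟩
  intro j hj
  induction j with
  | zero => exact ⟨v, hv, .nil, .nil, rfl⟩
  | succ j ih =>
    obtain ⟨u, hu, p, hp, rfl⟩ := ih (by omega)
    have hcard : #(p.support.toFinset.erase u) < #(H.neighborFinset u) := by
      have hsupp := p.support.toFinset_card_le
      rw [Walk.length_support] at hsupp
      rw [card_erase_of_mem (by simp), card_neighborFinset_eq_degree]
      have := hdeg u hu
      omega
    obtain ⟨w, hw, hwp⟩ := exists_mem_notMem_of_card_lt_card hcard
    rw [mem_neighborFinset] at hw
    refine ⟨w, hs (H.neighborSet_subset_support u hw), .cons hw.symm p,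
      (Walk.cons_isPath_iff _ _).2 ⟨hp, fun h => hwp ?_⟩, by simp⟩
    simpa [hw.ne'] using h

theorem card_edgeFinset_le_of_forall_isPath_length_ne (hs : H.support ⊆ s)
    (hpath : ∀ u v (p : H.Walk u v), p.IsPath → p.length ≠ m) :
    #H.edgeFinset ≤ m * #s := by
  induction s using Finset.strongInduction generalizing H with
  | H s ih =>
  rcases s.eq_empty_or_nonempty with rfl | ⟨v₀, hv₀⟩
  · suffices H.edgeFinset = ∅ by simp [this]
    refine eq_empty_of_forall_notMem (Sym2.ind fun a b hab => ?_)
    simpa using hs ⟨b, mem_edgeFinset.1 hab⟩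
  obtain ⟨v, hv, hdeg⟩ : ∃ v ∈ s, H.degree v < m := by
    by_contra! h
    obtain ⟨u, p, hp, hlen⟩ := exists_isPath_length_eq_of_le_degree hs h hv₀
    exact hpath u v₀ p hp hlen
  have hH' := ih (s.erase v) (erase_ssubset hv) (H := H.deleteIncidenceSet v)
    (fun w hw => by
      have := H.support_deleteIncidenceSet_subset v hw
      exact mem_erase.2 ⟨by simpa using this.2, hs this.1⟩)
    (fun u w p hp => by simpa using hpath u w (p.mapLe (H.deleteIncidenceSet_le v)) (hp.mapLe _))
  rw [card_edgeFinset_deleteIncidenceSet, card_erase_of_mem hv] at hH'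
  have hv_edges : H.degree v ≤ #H.edgeFinset := by
    rw [← card_incidenceFinset_eq_degree]; exact card_le_card (H.incidenceFinset_subset v)
  have hs_pos : 0 < #s := card_pos.2 ⟨v, hv⟩
  calc #H.edgeFinset ≤ m * (#s - 1) + m := by omega
    _ = m * #s := by rw [← Nat.mul_succ]; congr 1; omega

end LongPaths

def codegreeGraphOn {V : Type*} (G : SimpleGraph V) (s : Set V) (t : ℕ) : SimpleGraph V where
  Adj a b := a ≠ b ∧ a ∈ s ∧ b ∈ s ∧ t ≤ (G.commonNeighbors a b).ncard
  symm := ⟨fun _ _ h => ⟨h.1.symm, h.2.2.1, h.2.1, by rw [commonNeighbors_symm]; exact h.2.2.2⟩⟩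
  loopless := ⟨fun _ h => h.1 rfl⟩

lemma support_codegreeGraphOn_subset {V : Type*} (G : SimpleGraph V) (s : Set V) (t : ℕ) :
    (G.codegreeGraphOn s t).support ⊆ s :=
  fun _ ⟨_, h⟩ => h.2.1

lemma ncard_cherries_eq_sum_card_dart {V : Type*} [Fintype V] (G : SimpleGraph V) (t : ℕ) :
    {p : V × V × V | G.Adj p.1 p.2.1 ∧ G.Adj p.2.1 p.2.2 ∧ p.1 ≠ p.2.2 ∧
      t ≤ (G.neighborSet p.1 ∩ G.neighborSet p.2.2).ncard}.ncard =
      ∑ y, Nat.card (G.codegreeGraphOn (G.neighborSet y) t).Dart := by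
  classical
  rw [← Nat.card_coe_set_eq, ← Nat.card_sigma]
  exact Nat.card_congr
    { toFun := fun ⟨(x, y, z), h⟩ => ⟨y, ⟨(x, z), h.2.2.1, h.1.symm, h.2.1, h.2.2.2⟩⟩
      invFun := fun ⟨y, ⟨(x, z), h⟩⟩ => ⟨(x, y, z), h.2.1.symm, h.2.2.1, h.1, h.2.2.2⟩
      left_inv := fun _ => rfl
      right_inv := fun _ => rfl }

end SimpleGraph

namespace ProperColoring

variable {V γ : Type*} {G : SimpleGraph V} {c : Sym2 V → γ}

lemma injOn_neighborSet_s12 (hc : ProperColoring G c) (v : V) :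
    Set.InjOn (fun w => c s(v, w)) (G.neighborSet v) := by
  intro a ha b hb hab
  by_contra hne
  exact hc _ _ ha hb (fun h => hne (Sym2.congr_right.1 h)) ⟨v, by simp, by simp⟩ hab

lemma apply_ne_of_adj (hc : ProperColoring G c) {u v w : V} (hu : G.Adj v u) (hw : G.Adj v w)
    (huw : u ≠ w) : c s(v, u) ≠ c s(v, w) :=
  fun h => huw (hc.injOn_neighborSet_s12 v hu hw h)

lemma card_filter_apply_mem_le (hc : ProperColoring G c) {v : V} {S : Finset V}
    (hS : ↑S ⊆ G.neighborSet v) (B : Finset γ) [DecidablePred (c s(v, ·) ∈ B)] :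
    #(S.filter (c s(v, ·) ∈ B)) ≤ #B :=
  card_le_card_of_injOn _ (fun _ hw => (mem_filter.1 hw).2)
    ((hc.injOn_neighborSet_s12 v).mono fun _ hw => hS (mem_filter.1 hw).1)

lemma exists_commonNeighbor_avoiding [Fintype V] (hc : ProperColoring G c) {u z : V}
    (A : Finset V) (B : Finset γ) (h : #A + 2 * #B < (G.commonNeighbors u z).ncard) :
    ∃ w, G.Adj u w ∧ G.Adj z w ∧ w ∉ A ∧ c s(u, w) ∉ B ∧ c s(z, w) ∉ B := by
  classical
  set N := (G.commonNeighbors u z).toFinset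
  have hbad : #(A ∪ N.filter (c s(u, ·) ∈ B) ∪ N.filter (c s(z, ·) ∈ B)) < #N := by
    have hu := hc.card_filter_apply_mem_le (v := u) (S := N)
      (by simpa [N] using G.commonNeighbors_subset_neighborSet_left u z) B
    have hz := hc.card_filter_apply_mem_le (v := z) (S := N)
      (by simpa [N] using G.commonNeighbors_subset_neighborSet_right u z) B
    have := card_union_le (A ∪ N.filter (c s(u, ·) ∈ B)) (N.filter (c s(z, ·) ∈ B))
    have := card_union_le A (N.filter (c s(u, ·) ∈ B))
    have hN : #N = (G.commonNeighbors u z).ncard := (Set.ncard_eq_toFinset_card' _).symm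
    omega
  obtain ⟨w, hwN, hw⟩ := exists_mem_notMem_of_card_lt_card hbad
  simp only [mem_union, mem_filter, not_or] at hw
  have hadj : G.Adj u w ∧ G.Adj z w := by simpa [N, mem_commonNeighbors] using hwN
  exact ⟨w, hadj.1, hadj.2, hw.1.1, fun h => hw.1.2 ⟨hwN, h⟩, fun h => hw.2 ⟨hwN, h⟩⟩

/-- Each edge of `p` consumes one new forbidden vertex and two new forbidden colours, whence the
budget of `5` per edge. -/
lemma exists_rainbow_subdivision [Fintype V] (hc : ProperColoring G c)
    {H : SimpleGraph V} {t : ℕ} (hH : ∀ a b, H.Adj a b → t ≤ (G.commonNeighbors a b).ncard) :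
    ∀ {u v : V} (p : H.Walk u v), p.IsPath → ∀ (A : Finset V) (B : Finset γ),
      (∀ x ∈ p.support, x ∈ A) → #A + 2 * #B + 5 * p.length ≤ t →
      ∃ q : G.Walk u v, q.length = 2 * p.length ∧ q.IsPath ∧ (q.edges.map c).Nodup ∧
        (∀ e ∈ q.edges, c e ∉ B) ∧ ∀ x ∈ q.support, x ∈ A → x ∈ p.support
  | _, _, .nil, _, _, _, _, _ => ⟨.nil, by simp⟩
  | u, v, .cons (v := z) huz p, hp, A, B, hA, ht => by
    classical
    rw [Walk.cons_isPath_iff] at hp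
    simp only [Walk.support_cons, List.mem_cons, forall_eq_or_imp, Walk.length_cons] at hA ht
    obtain ⟨w, huw, hzw, hwA, hcuw, hczw⟩ :=
      hc.exists_commonNeighbor_avoiding (u := u) (z := z) A B (by have := hH _ _ huz; omega)
    obtain ⟨q, hlen, hq, hqc, hqB, hqA⟩ := exists_rainbow_subdivision hc hH p hp.1
      (insert w A) (insert (c s(u, w)) (insert (c s(z, w)) B))
      (fun x hx => mem_insert_of_mem (hA.2 x hx))
      (by grind [card_insert_le])
    have hwq : w ∉ q.support := fun h => hwA (hA.2 w (hqA w h (mem_insert_self w A)))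
    have huq : u ∉ q.support := fun h => hp.2 (hqA u h (mem_insert_of_mem hA.1))
    have hcol : c s(u, w) ≠ c s(w, z) := by
      rw [Sym2.eq_swap]
      exact hc.apply_ne_of_adj huw.symm hzw.symm huz.ne
    have hqB' : ∀ β ∈ q.edges.map c, β ≠ c s(u, w) ∧ β ≠ c s(w, z) ∧ β ∉ B := by
      simp only [List.mem_map, forall_exists_index, and_imp, forall_apply_eq_imp_iff₂]
      intro e he
      simpa [Sym2.eq_swap (a := w), not_or] using hqB e he
    refine ⟨.cons huw (.cons hzw.symm q), by simp [hlen]; ring, ?_, ?_, ?_, ?_⟩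
    · simp only [Walk.cons_isPath_iff, Walk.support_cons, List.mem_cons, not_or]
      exact ⟨⟨hq, hwq⟩, fun h => hwA (h ▸ hA.1), huq⟩
    · simp only [Walk.edges_cons, List.map_cons, List.nodup_cons, List.mem_cons, not_or]
      exact ⟨⟨hcol, fun h => (hqB' _ h).1 rfl⟩, fun h => (hqB' _ h).2.1 rfl, hqc⟩
    · simp only [Walk.edges_cons, List.mem_cons, forall_eq_or_imp]
      refine ⟨hcuw, by rwa [Sym2.eq_swap], fun e he => (hqB' _ (List.mem_map_of_mem he)).2.2⟩
    · simp only [Walk.support_cons, List.mem_cons, forall_eq_or_imp]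
      refine ⟨fun _ => by simp, fun h => absurd h hwA, fun x hx hxA => .inr (hqA x hx
        (mem_insert_of_mem hxA))⟩

lemma hasRainbowCycle_of_isPath [Fintype V] (hc : ProperColoring G c) {y u v : V} {t : ℕ}
    (p : (G.codegreeGraphOn (G.neighborSet y) t).Walk u v) (hp : p.IsPath) (hlen : p.length ≠ 0)
    (ht : 8 * p.length + 4 ≤ t) : HasRainbowCycle G c (2 * p.length + 2) := by
  classical
  have hy : ∀ x ∈ p.support, G.Adj y x := fun x hx =>
    support_codegreeGraphOn_subset _ _ _
      (mem_support_of_mem_walk_support p (fun h => hlen (Walk.length_eq_zero_iff.2 h)) hx)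
  have huv : u ≠ v := by
    rintro rfl
    exact hlen (Walk.length_eq_zero_iff.2 (Walk.isPath_iff_nil.1 hp))
  have hcard := p.support.toFinset_card_le
  rw [Walk.length_support] at hcard
  -- Forbidding `y` and the colours at `y` of the vertices of `p` uses `3 * p.length + 4` of the
  -- budget `#A + 2 * #B`.
  obtain ⟨q, hqlen, hq, hqc, hqB, hqA⟩ :=
    hc.exists_rainbow_subdivision (H := G.codegreeGraphOn _ t) (fun _ _ h => h.2.2.2) p hp
      (insert y p.support.toFinset) (p.support.toFinset.image (c s(y, ·)))
      (fun x hx => by simp [hx]) (by grind [card_insert_le, card_image_le])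
  have hyq : y ∉ q.support := fun h => (hy y (hqA y h (mem_insert_self _ _))).ne rfl
  have hcq : ∀ x ∈ p.support, c s(y, x) ∉ q.edges.map c := by
    intro x hx h
    obtain ⟨e, he, hce⟩ := List.mem_map.1 h
    exact hqB e he (hce ▸ mem_image_of_mem _ (by simpa using hx))
  have hyu := hy u p.start_mem_support
  have hyv := hy v p.end_mem_support
  have hrainbow : ((Walk.cons hyu (q.concat hyv.symm)).edges.map c).Nodup := by
    rw [Walk.edges_cons, Walk.edges_concat, Sym2.eq_swap (a := v)]
    simp only [List.concat_eq_append, List.map_cons, List.map_append, List.map_nil,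
      List.nodup_cons, List.nodup_append, List.mem_append, List.mem_singleton, not_or]
    refine ⟨⟨hcq u p.start_mem_support, hc.apply_ne_of_adj hyu hyv huv⟩, hqc, by simp,
      fun a ha b hb => ?_⟩
    rw [hb]
    exact ne_of_mem_of_not_mem ha (hcq v p.end_mem_support)
  refine ⟨y, .cons hyu (q.concat hyv.symm), ?_, by simp [hqlen], hrainbow⟩
  refine (Walk.cons_isCycle_iff _ _).2 ⟨hq.concat hyq _, fun h => ?_⟩
  exact (List.nodup_cons.1 hrainbow).1 (List.mem_map_of_mem h)

end ProperColoring

/-- in a properly coloured `n`-vertex graph with no rainbow `C_{2k}`,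
the number of paths `(x, y, z)` whose endpoints have at least `100k` common neighbours
is at most `C·|E(G)|` for a constant `C = C(k)`. -/
theorem bad_cherry_count (k : ℕ) (hk : 2 ≤ k) :
    ∃ C : ℕ, ∀ (V : Type) [Fintype V] (G : SimpleGraph V) (γ : Type) (c : Sym2 V → γ),
      ProperColoring G c → ¬ HasRainbowCycle G c (2 * k) →
      {p : V × V × V | G.Adj p.1 p.2.1 ∧ G.Adj p.2.1 p.2.2 ∧ p.1 ≠ p.2.2 ∧
          100 * k ≤ (G.neighborSet p.1 ∩ G.neighborSet p.2.2).ncard}.ncard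
        ≤ C * G.edgeSet.ncard := by
  refine ⟨4 * (k - 1), fun V _ G γ c hc hnc => ?_⟩
  classical
  have hlink : ∀ y, #(G.codegreeGraphOn (G.neighborSet y) (100 * k)).edgeFinset ≤
      (k - 1) * G.degree y := fun y =>
    card_edgeFinset_le_of_forall_isPath_length_ne (by simpa using support_codegreeGraphOn_subset ..)
      fun u v p hp hlen => hnc <| by
        simpa [hlen, show 2 * (k - 1) + 2 = 2 * k by omega] using
          hc.hasRainbowCycle_of_isPath p hp (by omega) (by omega)
  rw [G.ncard_cherries_eq_sum_card_dart, ← coe_edgeFinset, Set.ncard_coe_finset]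
  calc ∑ y, Nat.card (G.codegreeGraphOn (G.neighborSet y) (100 * k)).Dart
      = ∑ y, 2 * #(G.codegreeGraphOn (G.neighborSet y) (100 * k)).edgeFinset := by
        simp [Nat.card_eq_fintype_card, dart_card_eq_twice_card_edges]
    _ ≤ ∑ y, 2 * ((k - 1) * G.degree y) := by gcongr; exact hlink _
    _ = 2 * (k - 1) * ∑ y, G.degree y := by rw [mul_sum]; exact sum_congr rfl fun _ _ => by ring
    _ = 4 * (k - 1) * #G.edgeFinset := by rw [sum_degrees_eq_twice_card_edges]; ring
end
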